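/- arXiv:0811.4553 — 8 statements merged into one kernel-verified Lean document; each statement's English description precedes it below -/
import Mathlib

section
/- Let a < b be real numbers and let φ : ℝ → ℝ be twice continuously differentiable such that φ'(v) ≥ 1 for all v ∈ (a,b) and φ' is monotone on (a,b). Then for every real λ ≠ 0 one has |∫_a^b e^{iλφ(v)} dv| ≤ 3/|λ|. -/
open MeasureTheory intervalIntegral

lemma aux_deriv_nonneg {f : ℝ → ℝ} {a b x : ℝ} (hx : x ∈ Set.Ioo a b)
    (hd : DifferentiableAt ℝ f x) (hm : MonotoneOn f (Set.Ioo a b)) :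
    0 ≤ deriv f x := by
  have h := hd.hasDerivAt
  rw [hasDerivAt_iff_tendsto_slope] at h
  have h2 : Filter.Tendsto (slope f x) (nhdsWithin x (Set.Ioi x)) (nhds (deriv f x)) :=
    h.mono_left (nhdsWithin_mono x (fun y hy => ne_of_gt hy))
  refine ge_of_tendsto h2 ?_
  filter_upwards [Ioo_mem_nhdsGT_of_mem (Set.mem_Ico.mpr ⟨le_refl x, hx.2⟩)] with y hy
  rw [slope_def_field]
  have h1 : f x ≤ f y := hm hx ⟨lt_trans hx.1 hy.1, hy.2⟩ hy.1.le
  have h2 : 0 < y - x := sub_pos.mpr hy.1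
  exact div_nonneg (sub_nonneg.mpr h1) h2.le

theorem stmt_1 (a b : ℝ) (hab : a < b) (φ : ℝ → ℝ)
    (hφ : ContDiff ℝ 2 φ)
    (hder : ∀ v ∈ Set.Ioo a b, 1 ≤ deriv φ v)
    (hmono : MonotoneOn (deriv φ) (Set.Ioo a b) ∨ AntitoneOn (deriv φ) (Set.Ioo a b))
    (l : ℝ) (hl : l ≠ 0) :
    ‖∫ v in a..b, Complex.exp (Complex.I * l * φ v)‖ ≤ 3 / |l| := by
  have hab' : a ≤ b := hab.le
  have huIcc : Set.uIcc a b = Set.Icc a b := Set.uIcc_of_le hab'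
  set g := deriv φ with hgdef
  have hφd : Differentiable ℝ φ := hφ.differentiable two_ne_zero
  have hg : ContDiff ℝ 1 g :=
    (contDiff_succ_iff_deriv.mp (show ContDiff ℝ (1 + 1) φ by norm_num; exact hφ)).2.2
  have hgd : Differentiable ℝ g := hg.differentiable one_ne_zero
  have hgc : Continuous g := hg.continuous
  have hg'c : Continuous (deriv g) := (contDiff_one_iff_deriv.mp hg).2
  -- g ≥ 1 on the closed interval
  have h1 : ∀ v ∈ Set.Icc a b, 1 ≤ g v := by
    have hcl : closure (Set.Ioo a b) ⊆ {x | 1 ≤ g x} :=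
      closure_minimal (fun x hx => hder x hx) (isClosed_le continuous_const hgc)
    rw [closure_Ioo hab.ne] at hcl
    exact fun v hv => hcl hv
  have hlpos : 0 < |l| := abs_pos.mpr hl
  -- complex phase multiplier
  have hcne : ∀ x ∈ Set.Icc a b, (Complex.I * l * g x : ℂ) ≠ 0 := by
    intro x hx
    have hgx : (0:ℝ) < g x := lt_of_lt_of_le one_pos (h1 x hx)
    exact mul_ne_zero (mul_ne_zero Complex.I_ne_zero (by exact_mod_cast hl))
      (by exact_mod_cast hgx.ne')
  set F : ℝ → ℂ := fun v => Complex.exp (Complex.I * l * φ v) with hFdef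
  have hF : ∀ x, HasDerivAt F (F x * (Complex.I * l * g x)) x := by
    intro x
    have h0 : HasDerivAt (fun v : ℝ => (φ v : ℂ)) (g x) x := (hφd x).hasDerivAt.ofReal_comp
    have h2 : HasDerivAt (fun v : ℝ => Complex.I * l * (φ v : ℂ)) (Complex.I * l * g x) x :=
      h0.const_mul (Complex.I * l)
    exact h2.cexp
  set u : ℝ → ℂ := fun v => (Complex.I * l * g v)⁻¹ with hudef
  set u' : ℝ → ℂ := fun v => -((Complex.I * l * g v) ^ 2)⁻¹ * (Complex.I * l * deriv g v)
    with hu'def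
  have hu : ∀ x ∈ Set.uIcc a b, HasDerivAt u (u' x) x := by
    intro x hx
    rw [huIcc] at hx
    have hgx : HasDerivAt (fun v : ℝ => Complex.I * l * (g v : ℂ)) (Complex.I * l * deriv g x) x :=
      (hgd x).hasDerivAt.ofReal_comp.const_mul (Complex.I * l)
    have h3 := (hasDerivAt_inv (hcne x hx)).comp x hgx
    exact h3
  -- norm facts
  have hFnorm : ∀ x : ℝ, ‖F x‖ = 1 := by
    intro x
    rw [hFdef]
    simp [Complex.norm_exp, Complex.mul_re, Complex.mul_im]
  have hcnorm : ∀ x ∈ Set.Icc a b, ‖Complex.I * l * g x‖ = |l| * g x := by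
    intro x hx
    have : (0:ℝ) < g x := lt_of_lt_of_le one_pos (h1 x hx)
    rw [norm_mul, norm_mul, Complex.norm_I, Complex.norm_real, Complex.norm_real,
      one_mul, Real.norm_eq_abs, Real.norm_eq_abs, abs_of_pos this]
  -- continuity / integrability
  have hccont : Continuous fun v : ℝ => (Complex.I * l * g v : ℂ) :=
    continuous_const.mul (Complex.continuous_ofReal.comp hgc)
  have hFcont : Continuous F :=
    Complex.continuous_exp.comp (continuous_const.mul (Complex.continuous_ofReal.comp hφd.continuous))
  have hu'cont : ContinuousOn u' (Set.uIcc a b) := by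
    rw [huIcc, hu'def]
    refine ContinuousOn.mul (ContinuousOn.neg (ContinuousOn.inv₀ ((hccont.pow 2).continuousOn) ?_)) 
      (continuous_const.mul (Complex.continuous_ofReal.comp hg'c)).continuousOn
    exact fun x hx => pow_ne_zero 2 (hcne x hx)
  have hu'int : IntervalIntegrable u' volume a b := hu'cont.intervalIntegrable
  have hF'int : IntervalIntegrable (fun x => F x * (Complex.I * l * g x)) volume a b :=
    (hFcont.mul hccont).intervalIntegrable a b
  -- integration by parts
  have hparts := intervalIntegral.integral_mul_deriv_eq_deriv_mul hu (fun x _ => hF x) hu'int hF'int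
  have hkey : (∫ v in a..b, F v) = u b * F b - u a * F a - ∫ x in a..b, u' x * F x := by
    rw [← hparts]
    apply intervalIntegral.integral_congr
    intro x hx
    rw [huIcc] at hx
    show F x = u x * (F x * (Complex.I * l * g x))
    rw [hudef]
    rw [mul_comm (F x), ← mul_assoc, inv_mul_cancel₀ (hcne x hx), one_mul]
  -- boundary terms
  have hbdry : ∀ x ∈ Set.Icc a b, ‖u x * F x‖ ≤ |l|⁻¹ := by
    intro x hx
    have hgx : (0:ℝ) < g x := lt_of_lt_of_le one_pos (h1 x hx)
    rw [norm_mul, hFnorm x, mul_one, hudef]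
    rw [norm_inv, hcnorm x hx]
    apply inv_anti₀ hlpos
    nlinarith [h1 x hx]
  -- pointwise norm of the integrand
  have hnormu' : ∀ x ∈ Set.Icc a b, ‖u' x * F x‖ = |deriv g x| / g x ^ 2 * |l|⁻¹ := by
    intro x hx
    have hgx : (0:ℝ) < g x := lt_of_lt_of_le one_pos (h1 x hx)
    rw [norm_mul, hFnorm x, mul_one, hu'def]
    have habs2 : ‖Complex.I * l * deriv g x‖ = |l| * |deriv g x| := by
      rw [norm_mul, norm_mul, Complex.norm_I, Complex.norm_real, Complex.norm_real, one_mul, Real.norm_eq_abs, Real.norm_eq_abs]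
    rw [norm_mul, norm_neg, norm_inv, norm_pow, hcnorm x hx, habs2]
    field_simp
  -- the integral of the norm
  have hgne : ∀ x ∈ Set.Icc a b, g x ≠ 0 := fun x hx =>
    (lt_of_lt_of_le one_pos (h1 x hx)).ne'
  have hb_ae : ∀ᵐ x : ℝ ∂volume, x ≠ b := by
    have : (volume : Measure ℝ) {b} = 0 := measure_singleton b
    filter_upwards [measure_eq_zero_iff_ae_notMem.mp this] with x hx
    simpa using hx
  have hIbound : (∫ x in a..b, ‖u' x * F x‖) ≤ |l|⁻¹ := by
    rcases hmono with hm | hm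
    · -- monotone : deriv g ≥ 0 on Ioo
      have hsign : ∀ x ∈ Set.Ioo a b, 0 ≤ deriv g x := fun x hx =>
        aux_deriv_nonneg hx (hgd x) hm
      have hW : ∀ x ∈ Set.uIcc a b,
          HasDerivAt (fun v => -(g v)⁻¹ * |l|⁻¹) (deriv g x / g x ^ 2 * |l|⁻¹) x := by
        intro x hx
        rw [huIcc] at hx
        have h2 := (((hgd x).hasDerivAt.inv (hgne x hx)).neg).mul_const |l|⁻¹
        exact h2.congr_deriv (by ring)
      have hψint : IntervalIntegrable (fun x => deriv g x / g x ^ 2 * |l|⁻¹) volume a b := by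
        apply ContinuousOn.intervalIntegrable
        rw [huIcc]
        exact ((hg'c.continuousOn.div ((hgc.pow 2).continuousOn)
          (fun x hx => pow_ne_zero 2 (hgne x hx))).mul continuousOn_const)
      have hFTC := intervalIntegral.integral_eq_sub_of_hasDerivAt hW hψint
      have heq : (∫ x in a..b, ‖u' x * F x‖) = ∫ x in a..b, deriv g x / g x ^ 2 * |l|⁻¹ := by
        apply intervalIntegral.integral_congr_ae
        filter_upwards [hb_ae] with x hxb hx
        rw [Set.uIoc_of_le hab'] at hx
        have hx' : x ∈ Set.Ioo a b := ⟨hx.1, lt_of_le_of_ne hx.2 hxb⟩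
        rw [hnormu' x (Set.Ioo_subset_Icc_self hx'), abs_of_nonneg (hsign x hx')]
      rw [heq, hFTC]
      have hga : (g a)⁻¹ ≤ 1 := by
        have := h1 a (Set.left_mem_Icc.mpr hab')
        rw [inv_le_one_iff₀]; right; exact this
      have hgb : (0:ℝ) < (g b)⁻¹ :=
        inv_pos.mpr (lt_of_lt_of_le one_pos (h1 b (Set.right_mem_Icc.mpr hab')))
      have : -(g b)⁻¹ * |l|⁻¹ - -(g a)⁻¹ * |l|⁻¹ = ((g a)⁻¹ - (g b)⁻¹) * |l|⁻¹ := by ring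
      rw [this]
      have h9 : ((g a)⁻¹ - (g b)⁻¹) ≤ 1 := by linarith
      nlinarith [inv_pos.mpr hlpos]
    · -- antitone : deriv g ≤ 0 on Ioo
      have hsign : ∀ x ∈ Set.Ioo a b, deriv g x ≤ 0 := by
        intro x hx
        have : 0 ≤ deriv (fun v => -g v) x := by
          apply aux_deriv_nonneg hx ((hgd x).neg)
          intro s hs t ht hst
          exact neg_le_neg (hm hs ht hst)
        rw [deriv.fun_neg] at this
        linarith
      have hW : ∀ x ∈ Set.uIcc a b,
          HasDerivAt (fun v => (g v)⁻¹ * |l|⁻¹) (-(deriv g x) / g x ^ 2 * |l|⁻¹) x := by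
        intro x hx
        rw [huIcc] at hx
        have h2 := ((hgd x).hasDerivAt.inv (hgne x hx)).mul_const |l|⁻¹
        exact h2
      have hψint : IntervalIntegrable (fun x => -(deriv g x) / g x ^ 2 * |l|⁻¹) volume a b := by
        apply ContinuousOn.intervalIntegrable
        rw [huIcc]
        exact ((hg'c.neg.continuousOn.div ((hgc.pow 2).continuousOn)
          (fun x hx => pow_ne_zero 2 (hgne x hx))).mul continuousOn_const)
      have hFTC := intervalIntegral.integral_eq_sub_of_hasDerivAt hW hψint
      have heq : (∫ x in a..b, ‖u' x * F x‖) = ∫ x in a..b, -(deriv g x) / g x ^ 2 * |l|⁻¹ := by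
        apply intervalIntegral.integral_congr_ae
        filter_upwards [hb_ae] with x hxb hx
        rw [Set.uIoc_of_le hab'] at hx
        have hx' : x ∈ Set.Ioo a b := ⟨hx.1, lt_of_le_of_ne hx.2 hxb⟩
        rw [hnormu' x (Set.Ioo_subset_Icc_self hx'), abs_of_nonpos (hsign x hx')]
      rw [heq, hFTC]
      have hgb : (g b)⁻¹ ≤ 1 := by
        have := h1 b (Set.right_mem_Icc.mpr hab')
        rw [inv_le_one_iff₀]; right; exact this
      have hga : (0:ℝ) < (g a)⁻¹ :=
        inv_pos.mpr (lt_of_lt_of_le one_pos (h1 a (Set.left_mem_Icc.mpr hab')))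
      have h9 : ((g b)⁻¹ - (g a)⁻¹) ≤ 1 := by linarith
      have : (g b)⁻¹ * |l|⁻¹ - (g a)⁻¹ * |l|⁻¹ = ((g b)⁻¹ - (g a)⁻¹) * |l|⁻¹ := by ring
      rw [this]
      nlinarith [inv_pos.mpr hlpos]
  -- put everything together
  have hnormI : ‖∫ x in a..b, u' x * F x‖ ≤ |l|⁻¹ :=
    le_trans (intervalIntegral.norm_integral_le_integral_norm hab') hIbound
  rw [hkey]
  have hstep : ‖u b * F b - u a * F a - ∫ x in a..b, u' x * F x‖ ≤
      ‖u b * F b‖ + ‖u a * F a‖ + ‖∫ x in a..b, u' x * F x‖ :=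
    le_trans (norm_sub_le _ _) (add_le_add (norm_sub_le _ _) le_rfl)
  have hba := hbdry b (Set.right_mem_Icc.mpr hab')
  have haa := hbdry a (Set.left_mem_Icc.mpr hab')
  have : (3:ℝ) / |l| = |l|⁻¹ + |l|⁻¹ + |l|⁻¹ := by field_simp; ring
  rw [this]
  exact le_trans hstep (add_le_add (add_le_add hba haa) hnormI)
end

section
/- For every integer k ≥ 2 there exists a constant c̃_k > 0 such that: for all real numbers a < b, all δ > 0, every (k+1)-times continuously differentiable φ : ℝ → ℝ satisfying |φ^{(k)}(v)| ≥ δ for all v ∈ (a,b), every continuously differentiable ψ : ℝ → ℂ, and every real λ ≠ 0, one has |∫_a^b ψ(v) e^{iλφ(v)} dv| ≤ [max(b − a, c̃_k) / (min(1, δ^{1/k}) · max(1, |λ|^{1/k}))] · ( sup_{v∈(a,b)} |ψ(v)| + ∫_a^b |ψ'(v)| dv ). -/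
open MeasureTheory intervalIntegral Set

noncomputable abbrev osc (φ : ℝ → ℝ) (l : ℝ) (v : ℝ) : ℂ :=
  Complex.exp (Complex.I * l * φ v)

lemma osc_abs (φ : ℝ → ℝ) (l v : ℝ) : ‖osc φ l v‖ = 1 := by
  rw [osc, Complex.norm_exp]
  simp [Complex.mul_re, Complex.mul_im]

lemma osc_cont {φ : ℝ → ℝ} (hφ : Continuous φ) (l : ℝ) : Continuous (osc φ l) := by
  exact Complex.continuous_exp.comp (by continuity)

lemma osc_neg (φ : ℝ → ℝ) (l : ℝ) (a b : ℝ) :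
    ‖∫ v in a..b, osc (-φ) l v‖ = ‖∫ v in a..b, osc φ l v‖ := by
  have h : ∀ v, osc (-φ) l v = (starRingEnd ℂ) (osc φ l v) := by
    intro v
    rw [osc, osc, ← Complex.exp_conj]
    congr 1
    simp only [Pi.neg_apply, Complex.ofReal_neg, map_mul, Complex.conj_I, Complex.conj_ofReal]
    ring
  simp_rw [h]
  rw [intervalIntegral_eq_integral_uIoc, intervalIntegral_eq_integral_uIoc,
    integral_conj]
  split_ifs <;> simp

lemma extend_Icc {f : ℝ → ℝ} (hf : Continuous f) {a b c : ℝ} (hab : a < b)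
    (h : ∀ x ∈ Ioo a b, c ≤ f x) : ∀ x ∈ Icc a b, c ≤ f x := by
  have h1 : Icc a b ⊆ closure {x | c ≤ f x} := by
    rw [← closure_Ioo hab.ne]
    exact closure_mono h
  intro x hx
  have := h1 hx
  rwa [closure_eq_iff_isClosed.2 (isClosed_le continuous_const hf)] at this

lemma strong_mono {h : ℝ → ℝ} (hcont : Continuous h) (hdiff : Differentiable ℝ h)
    {a b δ : ℝ} (hd : ∀ x ∈ Ioo a b, δ ≤ deriv h x) :
    ∀ x ∈ Icc a b, ∀ y ∈ Icc a b, x ≤ y → δ * (y - x) ≤ h y - h x := by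
  intro x hx y hy hxy
  have hmono : MonotoneOn (fun t => h t - δ * t) (Icc a b) := by
    apply monotoneOn_of_deriv_nonneg (convex_Icc a b)
      (by fun_prop) (by fun_prop)
    intro t ht
    rw [interior_Icc] at ht
    have : deriv (fun t => h t - δ * t) t = deriv h t - δ := by
      have := ((hdiff t).hasDerivAt.sub ((hasDerivAt_id t).const_mul δ)).deriv
      rw [mul_one] at this; exact this
    rw [this]
    linarith [hd t ht]
  have := hmono hx hy hxy
  simp only at this
  linarith

lemma sign_const {f : ℝ → ℝ} (hf : Continuous f) {a b δ : ℝ} (hδ : 0 < δ)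
    (h : ∀ x ∈ Ioo a b, δ ≤ |f x|) :
    (∀ x ∈ Ioo a b, δ ≤ f x) ∨ (∀ x ∈ Ioo a b, δ ≤ -f x) := by
  by_cases hpos : ∀ x ∈ Ioo a b, 0 < f x
  · left
    intro x hx
    rcases le_abs'.1 (h x hx) with h1 | h1
    · linarith [hpos x hx]
    · exact h1
  · right
    push_neg at hpos
    obtain ⟨x₀, hx₀, hfx₀⟩ := hpos
    intro y hy
    rcases le_abs'.1 (h y hy) with h1 | h1
    · linarith
    · -- f y ≥ δ > 0 but f x₀ ≤ 0 : IVT gives a zero in between, contradiction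
      exfalso
      rcases le_total x₀ y with hc | hc
      · have : (0 : ℝ) ∈ f '' Icc x₀ y := by
          apply intermediate_value_Icc hc hf.continuousOn
          constructor <;> linarith
        obtain ⟨z, hz, hz0⟩ := this
        have hzI : z ∈ Ioo a b := ⟨lt_of_lt_of_le hx₀.1 hz.1, lt_of_le_of_lt hz.2 hy.2⟩
        have := h z hzI
        rw [hz0] at this
        simp at this
        linarith
      · have : (0 : ℝ) ∈ f '' Icc y x₀ := by
          apply intermediate_value_Icc' hc hf.continuousOn
          constructor <;> linarith
        obtain ⟨z, hz, hz0⟩ := this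
        have hzI : z ∈ Ioo a b := ⟨lt_of_lt_of_le hy.1 hz.1, lt_of_le_of_lt hz.2 hx₀.2⟩
        have := h z hzI
        rw [hz0] at this
        simp at this
        linarith

lemma contDiff_deriv' {φ : ℝ → ℝ} {n : ℕ} (hφ : ContDiff ℝ (n + 1 : ℕ) φ) :
    ContDiff ℝ (n : ℕ) (deriv φ) := by
  have : ContDiff ℝ ((n : WithTop ℕ∞) + 1) φ := by
    exact_mod_cast hφ
  exact (contDiff_succ_iff_deriv.mp this).2.2

lemma vdc_base {φ : ℝ → ℝ} (hφ : ContDiff ℝ 2 φ) {a b l μ : ℝ} (hab : a ≤ b)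
    (hl : 0 < l) (hμ : 0 < μ)
    (hd1 : ∀ x ∈ Ioo a b, μ ≤ deriv φ x)
    (hd2 : (∀ x ∈ Ioo a b, 0 ≤ deriv (deriv φ) x) ∨ (∀ x ∈ Ioo a b, deriv (deriv φ) x ≤ 0)) :
    ‖∫ v in a..b, osc φ l v‖ ≤ 3 / (l * μ) := by
  rcases hab.eq_or_lt with rfl | hab'
  · simp
    positivity
  have hφd : Differentiable ℝ φ := hφ.differentiable (by norm_num)
  have hφ' : ContDiff ℝ 1 (deriv φ) := contDiff_deriv' (n := 1) (by exact_mod_cast hφ)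
  have hφ'c : Continuous (deriv φ) := hφ'.continuous
  have hφ'd : Differentiable ℝ (deriv φ) := hφ'.differentiable (by norm_num)
  have hφ''c : Continuous (deriv (deriv φ)) := hφ'.continuous_deriv le_rfl
  have hd1' : ∀ x ∈ Icc a b, μ ≤ deriv φ x := extend_Icc hφ'c hab' hd1
  have hpos : ∀ x ∈ Icc a b, 0 < deriv φ x := fun x hx => lt_of_lt_of_le hμ (hd1' x hx)
  have huIcc : uIcc a b = Icc a b := uIcc_of_le hab
  set u : ℝ → ℂ := fun v => (Complex.I * (l : ℂ) * ((deriv φ v : ℝ) : ℂ))⁻¹ with hu_def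
  set u' : ℝ → ℂ := fun v =>
    -(Complex.I * (l : ℂ) * ((deriv (deriv φ) v : ℝ) : ℂ)) /
      (Complex.I * (l : ℂ) * ((deriv φ v : ℝ) : ℂ)) ^ 2 with hu'_def
  set F : ℝ → ℂ := osc φ l with hF_def
  set F' : ℝ → ℂ := fun v => Complex.I * (l : ℂ) * ((deriv φ v : ℝ) : ℂ) * F v with hF'_def
  have hlC : (Complex.I * (l : ℂ)) ≠ 0 := by
    simp [Complex.ext_iff, hl.ne']
  have hne : ∀ x ∈ Icc a b, (Complex.I * (l : ℂ) * ((deriv φ x : ℝ) : ℂ)) ≠ 0 := by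
    intro x hx
    exact mul_ne_zero hlC (by exact_mod_cast (hpos x hx).ne')
  have hFd : ∀ x, HasDerivAt F (F' x) x := by
    intro x
    have h1 : HasDerivAt (fun v : ℝ => ((φ v : ℝ) : ℂ)) ((deriv φ x : ℝ) : ℂ) x :=
      (hφd x).hasDerivAt.ofReal_comp
    have h3 := (h1.const_mul (Complex.I * (l : ℂ))).cexp
    have h4 : F' x = Complex.exp (Complex.I * (l:ℂ) * ((φ x : ℝ) : ℂ)) *
        (Complex.I * (l:ℂ) * ((deriv φ x : ℝ) : ℂ)) := by
      simp only [hF'_def, hF_def, osc]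
      ring
    rw [h4]
    convert h3 using 2 <;> ring
  have hud : ∀ x ∈ uIcc a b, HasDerivAt u (u' x) x := by
    intro x hx
    rw [huIcc] at hx
    have h2 := (hasDerivAt_const x (1:ℂ)).div
      (((hφ'd x).hasDerivAt.ofReal_comp).const_mul (Complex.I * (l:ℂ))) (hne x hx)
    simp only [one_div, zero_mul, one_mul, zero_sub] at h2
    exact h2.congr_of_eventuallyEq (Filter.Eventually.of_forall fun v => by simp [hu_def])
  have hcont_u' : ContinuousOn u' (uIcc a b) := by
    rw [huIcc]
    apply ContinuousOn.div
    · fun_prop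
    · fun_prop
    · intro x hx
      exact pow_ne_zero 2 (hne x hx)
  have hcont_F' : Continuous F' := by
    have := osc_cont hφ.continuous l
    fun_prop
  have hEq : ∫ v in a..b, F v = ∫ v in a..b, u v * F' v := by
    apply integral_congr
    intro x hx
    rw [huIcc] at hx
    show F x = u x * F' x
    rw [hu_def, hF'_def]
    exact (inv_mul_cancel_left₀ (hne x hx) (F x)).symm
  have hIBP : ∫ v in a..b, u v * F' v
      = u b * F b - u a * F a - ∫ v in a..b, u' v * F v :=
    integral_mul_deriv_eq_deriv_mul hud (fun x _ => hFd x)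
      (hcont_u'.intervalIntegrable)
      (hcont_F'.intervalIntegrable _ _)
  have habs_u : ∀ x ∈ Icc a b, ‖u x‖ ≤ 1 / (l * μ) := by
    intro x hx
    rw [hu_def]
    simp only [norm_inv, norm_mul, Complex.norm_I, Complex.norm_real, Real.norm_eq_abs, one_mul]
    rw [abs_of_pos hl, abs_of_pos (hpos x hx), one_div]
    exact inv_anti₀ (by positivity) (mul_le_mul_of_nonneg_left (hd1' x hx) hl.le)
  have habs_u' : ∀ x ∈ Icc a b,
      ‖u' x‖ = |deriv (deriv φ) x| / (l * (deriv φ x) ^ 2) := by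
    intro x hx
    rw [hu'_def]
    simp only [norm_div, norm_neg, norm_mul, norm_pow, Complex.norm_I, Complex.norm_real, Real.norm_eq_abs,
      one_mul]
    rw [abs_of_pos hl, abs_of_pos (hpos x hx)]
    rw [mul_pow]
    rw [div_eq_div_iff (mul_pos (pow_pos hl 2) (pow_pos (hpos x hx) 2)).ne'
      (mul_pos hl (pow_pos (hpos x hx) 2)).ne']
    ring
  -- inverse bounds at endpoints
  have hainv : (deriv φ a)⁻¹ ≤ 1 / μ := by
    rw [one_div]
    exact inv_anti₀ hμ (hd1' a (left_mem_Icc.2 hab))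
  have hbinv : (deriv φ b)⁻¹ ≤ 1 / μ := by
    rw [one_div]
    exact inv_anti₀ hμ (hd1' b (right_mem_Icc.2 hab))
  have hainv0 : 0 < (deriv φ a)⁻¹ := inv_pos.2 (hpos a (left_mem_Icc.2 hab))
  have hbinv0 : 0 < (deriv φ b)⁻¹ := inv_pos.2 (hpos b (right_mem_Icc.2 hab))
  -- FTC for 1/φ'
  have hftc : (∫ x in a..b, deriv (deriv φ) x / (deriv φ x) ^ 2)
      = (deriv φ a)⁻¹ - (deriv φ b)⁻¹ := by
    have hder : ∀ x ∈ uIcc a b, HasDerivAt (fun y => -(deriv φ y)⁻¹)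
        (deriv (deriv φ) x / (deriv φ x) ^ 2) x := by
      intro x hx
      rw [huIcc] at hx
      have h1 := ((hφ'd x).hasDerivAt.inv (hpos x hx).ne').neg
      have e : deriv (deriv φ) x / deriv φ x ^ 2 = -(-deriv (deriv φ) x / deriv φ x ^ 2) := by ring
      rw [e]
      exact h1
    have hint : IntervalIntegrable (fun x => deriv (deriv φ) x / (deriv φ x) ^ 2)
        volume a b := by
      apply ContinuousOn.intervalIntegrable
      rw [huIcc]
      apply ContinuousOn.div (by fun_prop) (by fun_prop)
      intro x hx
      exact pow_ne_zero 2 (hpos x hx).ne'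
    rw [integral_eq_sub_of_hasDerivAt hder hint]
    ring
  have hint2 : IntervalIntegrable (fun x => |deriv (deriv φ) x| / (l * (deriv φ x) ^ 2))
      volume a b := by
    apply ContinuousOn.intervalIntegrable
    rw [huIcc]
    apply ContinuousOn.div (by fun_prop) (by fun_prop)
    intro x hx
    have := hpos x hx
    positivity
  have hkey : (∫ x in a..b, |deriv (deriv φ) x| / (l * (deriv φ x) ^ 2)) ≤ 1 / (l * μ) := by
    have hsplit : ∀ x, |deriv (deriv φ) x| / (l * (deriv φ x) ^ 2)
        = (1 / l) * (|deriv (deriv φ) x| / (deriv φ x) ^ 2) := by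
      intro x; field_simp
    rcases hd2 with hp | hn
    · have hp' : ∀ x ∈ Icc a b, 0 ≤ deriv (deriv φ) x := extend_Icc hφ''c hab' hp
      have : (∫ x in a..b, |deriv (deriv φ) x| / (l * (deriv φ x) ^ 2))
          = (1 / l) * ∫ x in a..b, deriv (deriv φ) x / (deriv φ x) ^ 2 := by
        rw [← intervalIntegral.integral_const_mul]
        apply integral_congr
        intro x hx
        rw [huIcc] at hx
        beta_reduce
        rw [hsplit x, abs_of_nonneg (hp' x hx)]
      rw [this, hftc]
      calc (1 / l) * ((deriv φ a)⁻¹ - (deriv φ b)⁻¹)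
          ≤ (1 / l) * (1 / μ) := by
            apply mul_le_mul_of_nonneg_left _ (by positivity)
            linarith
        _ = 1 / (l * μ) := by field_simp
    · have hnegc : Continuous fun x => -(deriv (deriv φ) x) := hφ''c.neg
      have hn0 : ∀ x ∈ Ioo a b, (0:ℝ) ≤ -(deriv (deriv φ) x) := fun x hx => by
        linarith [hn x hx]
      have h0 := extend_Icc hnegc hab' hn0
      have hn' : ∀ x ∈ Icc a b, deriv (deriv φ) x ≤ 0 := fun x hx => by
        have := h0 x hx
        linarith
      have : (∫ x in a..b, |deriv (deriv φ) x| / (l * (deriv φ x) ^ 2))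
          = (1 / l) * ∫ x in a..b, -(deriv (deriv φ) x / (deriv φ x) ^ 2) := by
        rw [← intervalIntegral.integral_const_mul]
        apply integral_congr
        intro x hx
        rw [huIcc] at hx
        beta_reduce
        rw [hsplit x, abs_of_nonpos (hn' x hx)]
        ring
      rw [this, intervalIntegral.integral_neg, hftc]
      calc (1 / l) * -((deriv φ a)⁻¹ - (deriv φ b)⁻¹)
          ≤ (1 / l) * (1 / μ) := by
            apply mul_le_mul_of_nonneg_left _ (by positivity)
            linarith
        _ = 1 / (l * μ) := by field_simp
  -- assemble
  have hintF : IntervalIntegrable (fun v => u' v * F v) volume a b := by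
    apply ContinuousOn.intervalIntegrable
    exact hcont_u'.mul ((osc_cont hφ.continuous l).continuousOn)
  have hbound3 : ‖∫ v in a..b, u' v * F v‖ ≤ 1 / (l * μ) := by
    calc ‖∫ v in a..b, u' v * F v‖ ≤ ∫ v in a..b, ‖u' v * F v‖ :=
          norm_integral_le_integral_norm hab
      _ = ∫ v in a..b, |deriv (deriv φ) v| / (l * (deriv φ v) ^ 2) := by
          apply integral_congr
          intro x hx
          rw [huIcc] at hx
          beta_reduce
          rw [norm_mul, habs_u' x hx,
            hF_def, osc_abs, mul_one]
      _ ≤ 1 / (l * μ) := hkey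
  have habsF : ∀ x, ‖F x‖ = 1 := fun x => osc_abs φ l x
  calc ‖∫ v in a..b, osc φ l v‖
      = ‖u b * F b - u a * F a - ∫ v in a..b, u' v * F v‖ := by
        rw [show (∫ v in a..b, osc φ l v) = ∫ v in a..b, F v from rfl, hEq, hIBP]
    _ ≤ ‖u b * F b - u a * F a‖ + ‖∫ v in a..b, u' v * F v‖ := by
        exact norm_sub_le _ _
    _ ≤ (‖u b * F b‖ + ‖u a * F a‖)
        + ‖∫ v in a..b, u' v * F v‖ := by
        gcongr
        exact norm_sub_le _ _
    _ ≤ (1 / (l * μ) + 1 / (l * μ)) + 1 / (l * μ) := by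
        gcongr
        · rw [norm_mul, habsF, mul_one]
          exact habs_u b (right_mem_Icc.2 hab)
        · rw [norm_mul, habsF, mul_one]
          exact habs_u a (left_mem_Icc.2 hab)
    _ = 3 / (l * μ) := by ring

lemma vdc_split {φ h : ℝ → ℝ} (hφc : Continuous φ) (hhc : Continuous h)
    {a b δ r l B : ℝ} (hab : a ≤ b) (hδ : 0 < δ) (hr : 0 < r) (hB : 0 ≤ B)
    (hmono : ∀ x ∈ Icc a b, ∀ y ∈ Icc a b, x ≤ y → δ * (y - x) ≤ h y - h x)
    (hinner : ∀ a' b' : ℝ, a ≤ a' → a' ≤ b' → b' ≤ b →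
      (∀ x ∈ Ioo a' b', δ * r ≤ |h x|) →
      ‖∫ v in a'..b', osc φ l v‖ ≤ B) :
    ‖∫ v in a..b, osc φ l v‖ ≤ B + 2 * r + B := by
  set A : Set ℝ := {x | x ∈ Icc a b ∧ -(δ * r) ≤ h x} with hA_def
  have hAclosed : IsClosed A := by
    have : A = Icc a b ∩ {x | -(δ * r) ≤ h x} := rfl
    rw [this]
    exact isClosed_Icc.inter (isClosed_le continuous_const hhc)
  set S : Set ℝ := A ∪ {b} with hS_def
  have hSne : S.Nonempty := ⟨b, Or.inr rfl⟩
  have hSbdd : BddBelow S := by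
    refine ⟨a, fun x hx => ?_⟩
    rcases hx with hx | hx
    · exact hx.1.1
    · rw [mem_singleton_iff] at hx; rw [hx]; exact hab
  set c := sInf S with hc_def
  have hcS : c ∈ S := (hAclosed.union isClosed_singleton).csInf_mem hSne hSbdd
  have hac : a ≤ c := by
    apply le_csInf hSne
    intro y hy
    rcases hy with hy | hy
    · exact hy.1.1
    · rw [mem_singleton_iff] at hy; rw [hy]; exact hab
  have hcb : c ≤ b := csInf_le hSbdd (Or.inr rfl)
  set d := min b (c + 2 * r) with hd_def
  have hcd : c ≤ d := le_min hcb (by linarith)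
  have hdb : d ≤ b := min_le_left _ _
  have hint : ∀ u v : ℝ, IntervalIntegrable (osc φ l) volume u v :=
    fun u v => (osc_cont hφc l).intervalIntegrable u v
  have piece1 : ‖∫ v in a..c, osc φ l v‖ ≤ B := by
    apply hinner a c le_rfl hac hcb
    intro x hx
    have hxS : x ∉ S := fun hxS => absurd (csInf_le hSbdd hxS) (not_le.2 hx.2)
    have hxA : x ∉ A := fun hxA => hxS (Or.inl hxA)
    have hxIcc : x ∈ Icc a b := ⟨hx.1.le, le_trans hx.2.le hcb⟩
    have : ¬(-(δ * r) ≤ h x) := fun hc => hxA ⟨hxIcc, hc⟩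
    push_neg at this
    have h1 : δ * r ≤ -h x := by linarith
    exact le_trans h1 (neg_le_abs _)
  have piece2 : ‖∫ v in c..d, osc φ l v‖ ≤ 2 * r := by
    have := norm_integral_le_of_norm_le_const (C := 1) (f := osc φ l) (a := c) (b := d)
      (fun x _ => by rw [osc_abs])
    rw [abs_of_nonneg (by linarith : (0:ℝ) ≤ d - c)] at this
    have hd2r : d - c ≤ 2 * r := by
      have : d ≤ c + 2 * r := min_le_right _ _
      linarith
    calc ‖∫ v in c..d, osc φ l v‖ ≤ 1 * (d - c) := this
      _ ≤ 2 * r := by linarith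
  have piece3 : ‖∫ v in d..b, osc φ l v‖ ≤ B := by
    apply hinner d b (le_trans hac hcd) hdb le_rfl
    intro x hx
    have hdb' : d < b := lt_of_le_of_lt hx.1.le (lt_of_lt_of_le hx.2 le_rfl)
    have hc2r : c + 2 * r ≤ b := by
      by_contra hcon
      push_neg at hcon
      have : d = b := by rw [hd_def]; exact min_eq_left (by linarith)
      linarith
    have hdeq : d = c + 2 * r := min_eq_right hc2r
    have hcltb : c < b := by
      have : c < d := by rw [hdeq]; linarith
      linarith
    have hcA : c ∈ A := by
      rcases hcS with hcA | hcb'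
      · exact hcA
      · rw [mem_singleton_iff] at hcb'; exact absurd hcb' hcltb.ne
    have hhc' : -(δ * r) ≤ h c := hcA.2
    have hxIcc : x ∈ Icc a b := ⟨le_trans hac (le_trans hcd hx.1.le), hx.2.le⟩
    have hcIcc : c ∈ Icc a b := ⟨hac, hcb⟩
    have hcx : c ≤ x := le_trans hcd hx.1.le
    have hm := hmono c hcIcc x hxIcc hcx
    have hx2r : c + 2 * r < x := by rw [← hdeq]; exact hx.1
    have h1 : δ * r ≤ h x := by nlinarith
    exact le_trans h1 (le_abs_self _)
  have esum : (∫ v in a..b, osc φ l v)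
      = (∫ v in a..c, osc φ l v) + (∫ v in c..d, osc φ l v) + (∫ v in d..b, osc φ l v) := by
    rw [integral_add_adjacent_intervals (hint a c) (hint c d),
      integral_add_adjacent_intervals (hint a d) (hint d b)]
  rw [esum]
  calc ‖(∫ v in a..c, osc φ l v) + (∫ v in c..d, osc φ l v)
        + (∫ v in d..b, osc φ l v)‖
      ≤ ‖(∫ v in a..c, osc φ l v) + (∫ v in c..d, osc φ l v)‖
        + ‖∫ v in d..b, osc φ l v‖ := by
        exact norm_add_le _ _
    _ ≤ (‖∫ v in a..c, osc φ l v‖ + ‖∫ v in c..d, osc φ l v‖)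
        + ‖∫ v in d..b, osc φ l v‖ := by
        gcongr
        exact norm_add_le _ _
    _ ≤ B + 2 * r + B := by gcongr

lemma iteratedDeriv_neg'' (n : ℕ) (f : ℝ → ℝ) (a : ℝ) :
    iteratedDeriv n (-f) a = -iteratedDeriv n f a := iteratedDeriv_neg n f a

lemma vdc_unsign {k : ℕ} {δ l K : ℝ} (hδ : 0 < δ)
    (H : ∀ φ : ℝ → ℝ, ContDiff ℝ (k + 1 : ℕ) φ → ∀ a b : ℝ, a ≤ b →
      (∀ x ∈ Ioo a b, δ ≤ iteratedDeriv k φ x) →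
      ‖∫ v in a..b, osc φ l v‖ ≤ K) :
    ∀ φ : ℝ → ℝ, ContDiff ℝ (k + 1 : ℕ) φ → ∀ a b : ℝ, a ≤ b →
      (∀ x ∈ Ioo a b, δ ≤ |iteratedDeriv k φ x|) →
      ‖∫ v in a..b, osc φ l v‖ ≤ K := by
  intro φ hφ a b hab hd
  have hcont : Continuous (iteratedDeriv k φ) :=
    hφ.continuous_iteratedDeriv k (by exact_mod_cast Nat.le_succ k)
  rcases sign_const hcont hδ hd with hp | hn
  · exact H φ hφ a b hab hp
  · rw [← osc_neg φ l a b]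
    apply H (-φ) hφ.neg a b hab
    intro x hx
    rw [iteratedDeriv_neg'']
    simpa using hn x hx

lemma vdc_signed_base (φ : ℝ → ℝ) (hφ : ContDiff ℝ (3 : ℕ) φ) (a b δ l : ℝ) (hab : a ≤ b)
    (hδ : 0 < δ) (hl : 0 < l)
    (hd : ∀ x ∈ Ioo a b, δ ≤ iteratedDeriv 2 φ x) :
    ‖∫ v in a..b, osc φ l v‖ ≤ 8 * (l * δ) ^ (-(1:ℝ)/2) := by
  have hld : 0 < l * δ := mul_pos hl hδ
  set r := (l * δ) ^ (-(1:ℝ)/2) with hr_def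
  have hr : 0 < r := Real.rpow_pos_of_pos hld _
  have hd2 : ∀ x ∈ Ioo a b, δ ≤ deriv (deriv φ) x := by
    intro x hx
    have := hd x hx
    rwa [iteratedDeriv_succ, iteratedDeriv_one] at this
  have hφ2 : ContDiff ℝ (2 : ℕ) (deriv φ) := contDiff_deriv' (n := 2) hφ
  have hφ'c : Continuous (deriv φ) := hφ2.continuous
  have hφ'd : Differentiable ℝ (deriv φ) := hφ2.differentiable (by norm_num)
  have hmono := strong_mono hφ'c hφ'd hd2
  have hμ : 0 < δ * r := mul_pos hδ hr
  set B := 3 / (l * (δ * r)) with hB_def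
  have hB : 0 ≤ B := by positivity
  have hinner : ∀ a' b' : ℝ, a ≤ a' → a' ≤ b' → b' ≤ b →
      (∀ x ∈ Ioo a' b', δ * r ≤ |deriv φ x|) →
      ‖∫ v in a'..b', osc φ l v‖ ≤ B := by
    intro a' b' ha' hab' hb' habs
    have hsub : Ioo a' b' ⊆ Ioo a b := Ioo_subset_Ioo ha' hb'
    have hC2 : ContDiff ℝ 2 φ := hφ.of_le (by norm_num)
    rcases sign_const hφ'c hμ habs with hp | hn
    · exact vdc_base hC2 hab' hl hμ hp
        (Or.inl fun x hx => le_trans hδ.le (hd2 x (hsub hx)))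
    · rw [← osc_neg φ l a' b']
      have hδn : ∀ x ∈ Ioo a' b', δ * r ≤ deriv (-φ) x := by
        intro x hx
        have e1 : deriv (-φ) x = -(deriv φ x) := by
          rw [← iteratedDeriv_one, iteratedDeriv_neg'', iteratedDeriv_one]
        rw [e1]
        exact hn x hx
      have hδn2 : ∀ x ∈ Ioo a' b', deriv (deriv (-φ)) x ≤ 0 := by
        intro x hx
        have e2 : deriv (deriv (-φ)) x = -(deriv (deriv φ) x) := by
          have e3 : deriv (deriv (-φ)) x = iteratedDeriv 2 (-φ) x := by
            rw [iteratedDeriv_succ, iteratedDeriv_one]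
          rw [e3, iteratedDeriv_neg'', iteratedDeriv_succ, iteratedDeriv_one]
        rw [e2]
        have := hd2 x (hsub hx)
        linarith
      exact vdc_base hC2.neg hab' hl hμ hδn (Or.inr hδn2)
  have hsplit := vdc_split hφ.continuous hφ'c hab hδ hr hB hmono hinner
  have harith : B + 2 * r + B = 8 * (l * δ) ^ (-(1:ℝ)/2) := by
    have h1 : l * (δ * r) = (l * δ) ^ ((1:ℝ)/2) := by
      have e := Real.rpow_add hld 1 (-(1:ℝ)/2)
      rw [Real.rpow_one] at e
      rw [hr_def, ← mul_assoc, ← e]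
      norm_num
    have h2 : (l * δ) ^ (-(1:ℝ)/2) = ((l * δ) ^ ((1:ℝ)/2))⁻¹ := by
      rw [← Real.rpow_neg hld.le]
      norm_num
    rw [hB_def, h1, hr_def, h2]
    have h3 : (0:ℝ) < (l * δ) ^ ((1:ℝ)/2) := Real.rpow_pos_of_pos hld _
    field_simp
    ring
  rw [harith] at hsplit
  exact hsplit

lemma vdc_main (k : ℕ) (hk : 2 ≤ k) :
    ∀ φ : ℝ → ℝ, ContDiff ℝ (k + 1 : ℕ) φ → ∀ a b δ l : ℝ, a ≤ b → 0 < δ → 0 < l →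
      (∀ x ∈ Ioo a b, δ ≤ |iteratedDeriv k φ x|) →
      ‖∫ v in a..b, osc φ l v‖ ≤
        (5 * 2 ^ (k - 1) - 2) * (l * δ) ^ (-(1:ℝ)/(k:ℝ)) := by
  induction k, hk using Nat.le_induction with
  | base =>
    intro φ hφ a b δ l hab hδ hl hd
    have H : ∀ φ' : ℝ → ℝ, ContDiff ℝ (2 + 1 : ℕ) φ' → ∀ a' b' : ℝ, a' ≤ b' →
        (∀ x ∈ Ioo a' b', δ ≤ iteratedDeriv 2 φ' x) →
        ‖∫ v in a'..b', osc φ' l v‖ ≤ 8 * (l * δ) ^ (-(1:ℝ)/2) :=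
      fun φ' hφ' a' b' hab' hsgn =>
        vdc_signed_base φ' (by exact_mod_cast hφ') a' b' δ l hab' hδ hl hsgn
    have hres := vdc_unsign hδ H φ hφ a b hab hd
    convert hres using 2 <;> norm_num
  | succ k hk IH =>
    intro φ hφ a b δ l hab hδ hl hd
    have hld : 0 < l * δ := mul_pos hl hδ
    have hκ0 : (0:ℝ) < (k:ℝ) := by exact_mod_cast (by omega : 0 < k)
    have hκ1 : ((k:ℝ) + 1) ≠ 0 := by positivity
    have H : ∀ φ' : ℝ → ℝ, ContDiff ℝ ((k + 1) + 1 : ℕ) φ' → ∀ a' b' : ℝ, a' ≤ b' →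
        (∀ x ∈ Ioo a' b', δ ≤ iteratedDeriv (k+1) φ' x) →
        ‖∫ v in a'..b', osc φ' l v‖ ≤
          (5 * 2 ^ k - 2) * (l * δ) ^ (-(1:ℝ)/((k:ℝ)+1)) := by
      intro φ' hφ' a' b' hab' hsgn
      set r := (l * δ) ^ (-(1:ℝ)/((k:ℝ)+1)) with hr_def
      have hr : 0 < r := Real.rpow_pos_of_pos hld _
      have hcont : Continuous (iteratedDeriv k φ') :=
        hφ'.continuous_iteratedDeriv k (by exact_mod_cast (by omega : k ≤ k + 2))
      have hdiff : Differentiable ℝ (iteratedDeriv k φ') :=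
        hφ'.differentiable_iteratedDeriv k (by exact_mod_cast (by omega : k < k + 2))
      have hd2 : ∀ x ∈ Ioo a' b', δ ≤ deriv (iteratedDeriv k φ') x := by
        intro x hx
        rw [← iteratedDeriv_succ]
        exact hsgn x hx
      have hmono := strong_mono hcont hdiff hd2
      have hCk : (3:ℝ) ≤ 5 * 2 ^ (k - 1) - 2 := by
        have h1 : (1:ℝ) ≤ 2 ^ (k - 1) := one_le_pow₀ (by norm_num)
        linarith
      set B := (5 * 2 ^ (k - 1) - 2) * (l * (δ * r)) ^ (-(1:ℝ)/(k:ℝ)) with hB_def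
      have hB : 0 ≤ B := by
        apply mul_nonneg (by linarith)
        exact (Real.rpow_pos_of_pos (by positivity) _).le
      have hinner : ∀ a'' b'' : ℝ, a' ≤ a'' → a'' ≤ b'' → b'' ≤ b' →
          (∀ x ∈ Ioo a'' b'', δ * r ≤ |iteratedDeriv k φ' x|) →
          ‖∫ v in a''..b'', osc φ' l v‖ ≤ B := by
        intro a'' b'' _ hab'' _ habs
        exact IH φ' (hφ'.of_le (by exact_mod_cast (by omega : k + 1 ≤ k + 2)))
          a'' b'' (δ * r) l hab'' (mul_pos hδ hr) hl habs
      have hsplit := vdc_split hφ'.continuous hcont hab' hδ hr hB hmono hinner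
      have e2 : (l * (δ * r)) ^ (-(1:ℝ)/(k:ℝ)) = (l * δ) ^ (-(1:ℝ)/((k:ℝ)+1)) := by
        have e1 : l * (δ * r) = (l * δ) ^ (1 + (-(1:ℝ)/((k:ℝ)+1))) := by
          rw [hr_def, ← mul_assoc, Real.rpow_add hld, Real.rpow_one]
        rw [e1, ← Real.rpow_mul hld.le]
        congr 1
        field_simp
        ring
      have hp2 : (2:ℝ) ^ k = 2 ^ (k - 1) * 2 := by
        have hk1 : k - 1 + 1 = k := by omega
        rw [← hk1, pow_succ]
        rw [hk1]
      have harith : B + 2 * r + B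
          = (5 * 2 ^ k - 2) * (l * δ) ^ (-(1:ℝ)/((k:ℝ)+1)) := by
        rw [hB_def, e2, hr_def, hp2]
        ring
      rw [harith] at hsplit
      exact hsplit
    have hres := vdc_unsign hδ H φ hφ a b hab hd
    have hcast : (((k+1:ℕ)):ℝ) = (k:ℝ) + 1 := by push_cast; ring
    have hsub : (k + 1) - 1 = k := by omega
    rw [hsub, hcast]
    exact hres

lemma vdc_amp (k : ℕ) (hk : 2 ≤ k) {φ : ℝ → ℝ} {ψ : ℝ → ℂ} {a b δ l M : ℝ}
    (hφ : ContDiff ℝ (k + 1 : ℕ) φ) (hψ : ContDiff ℝ 1 ψ) (hab : a ≤ b)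
    (hδ : 0 < δ) (hl : 0 < l)
    (hd : ∀ x ∈ Ioo a b, δ ≤ |iteratedDeriv k φ x|)
    (hM : ∀ x ∈ Icc a b, ‖ψ x‖ ≤ M) :
    ‖∫ v in a..b, ψ v * osc φ l v‖ ≤
      ((5 * 2 ^ (k - 1) - 2) * (l * δ) ^ (-(1:ℝ)/(k:ℝ))) *
        (M + ∫ v in a..b, ‖deriv ψ v‖) := by
  set K := (5 * 2 ^ (k - 1) - 2) * (l * δ) ^ (-(1:ℝ)/(k:ℝ)) with hK_def
  have hM0 : 0 ≤ M := le_trans (norm_nonneg _) (hM a (left_mem_Icc.2 hab))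
  set F : ℝ → ℂ := fun x => ∫ v in a..x, osc φ l v with hF_def
  have hosc_cont : Continuous (osc φ l) := osc_cont hφ.continuous l
  have hFd : ∀ x, HasDerivAt F (osc φ l x) x := fun x =>
    (hosc_cont.integral_hasStrictDerivAt a x).hasDerivAt
  have hFc : Continuous F := by
    rw [continuous_iff_continuousAt]
    exact fun x => (hFd x).continuousAt
  have hFb : ∀ x ∈ Icc a b, ‖F x‖ ≤ K := by
    intro x hx
    apply vdc_main k hk φ hφ a x δ l hx.1 hδ hl
    intro y hy
    exact hd y ⟨hy.1, lt_of_lt_of_le hy.2 hx.2⟩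
  have hK0 : 0 ≤ K := le_trans (norm_nonneg _) (hFb a (left_mem_Icc.2 hab))
  have hψd : Differentiable ℝ ψ := hψ.differentiable (by norm_num)
  have hψ'c : Continuous (deriv ψ) := hψ.continuous_deriv le_rfl
  have hIBP : ∫ v in a..b, ψ v * osc φ l v
      = ψ b * F b - ψ a * F a - ∫ v in a..b, deriv ψ v * F v := by
    exact integral_mul_deriv_eq_deriv_mul
      (fun x _ => (hψd x).hasDerivAt)
      (fun x _ => hFd x)
      (hψ'c.intervalIntegrable _ _)
      (hosc_cont.intervalIntegrable _ _)
  have hFa : F a = 0 := integral_same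
  have hbound2 : ‖∫ v in a..b, deriv ψ v * F v‖
      ≤ K * ∫ v in a..b, ‖deriv ψ v‖ := by
    calc ‖∫ v in a..b, deriv ψ v * F v‖ ≤ ∫ v in a..b, ‖deriv ψ v * F v‖ :=
        norm_integral_le_integral_norm hab
      _ ≤ ∫ v in a..b, K * ‖deriv ψ v‖ := by
          apply integral_mono_on hab
          · exact ((hψ'c.mul hFc).norm).intervalIntegrable _ _
          · exact (continuous_const.mul hψ'c.norm).intervalIntegrable _ _
          · intro x hx
            rw [norm_mul, mul_comm]
            apply mul_le_mul_of_nonneg_right _ (norm_nonneg _)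
            exact hFb x hx
      _ = K * ∫ v in a..b, ‖deriv ψ v‖ := by
          rw [← intervalIntegral.integral_const_mul]
  calc ‖∫ v in a..b, ψ v * osc φ l v‖
      = ‖ψ b * F b - ∫ v in a..b, deriv ψ v * F v‖ := by
        rw [hIBP, hFa, mul_zero, sub_zero]
    _ ≤ ‖ψ b * F b‖ + ‖∫ v in a..b, deriv ψ v * F v‖ := by
        exact norm_sub_le _ _
    _ ≤ M * K + K * ∫ v in a..b, ‖deriv ψ v‖ := by
        gcongr
        rw [norm_mul]
        exact mul_le_mul (hM b (right_mem_Icc.2 hab)) (hFb b (right_mem_Icc.2 hab))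
          (norm_nonneg _) hM0
    _ = K * (M + ∫ v in a..b, ‖deriv ψ v‖) := by ring

lemma sup_facts {ψ : ℝ → ℂ} (hψc : Continuous ψ) {a b : ℝ} (hab : a < b) :
    (∀ v ∈ Icc a b, ‖ψ v‖ ≤ ⨆ v ∈ Ioo a b, ‖ψ v‖) ∧
    0 ≤ ⨆ v ∈ Ioo a b, ‖ψ v‖ := by
  set M := ⨆ v ∈ Ioo a b, ‖ψ v‖ with hM_def
  obtain ⟨C, hC⟩ := (isCompact_Icc (a := a) (b := b)).exists_bound_of_continuousOn
    hψc.continuousOn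
  have hbdd : BddAbove (range fun v => ⨆ _ : v ∈ Ioo a b, ‖ψ v‖) := by
    refine ⟨max C 0, ?_⟩
    rintro x ⟨v, rfl⟩
    beta_reduce
    by_cases hv : v ∈ Ioo a b
    · haveI : Nonempty (v ∈ Ioo a b) := ⟨hv⟩
      rw [ciSup_const]
      have := hC v (Ioo_subset_Icc_self hv)
      exact le_trans this (le_max_left _ _)
    · haveI : IsEmpty (v ∈ Ioo a b) := isEmpty_Prop.2 hv
      rw [Real.iSup_of_isEmpty]
      exact le_max_right _ _
  have hmem : ∀ v ∈ Ioo a b, ‖ψ v‖ ≤ M := by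
    intro v hv
    have h1 := le_ciSup hbdd v
    haveI : Nonempty (v ∈ Ioo a b) := ⟨hv⟩
    beta_reduce at h1
    rwa [ciSup_const] at h1
  have h0 : 0 ≤ M :=
    le_trans (norm_nonneg _) (hmem ((a+b)/2) ⟨by linarith, by linarith⟩)
  have hcont2 : Continuous fun x => M - ‖ψ x‖ :=
    continuous_const.sub (continuous_norm.comp hψc)
  have hext := extend_Icc hcont2 hab
    (fun x hx => by
      show (0:ℝ) ≤ M - ‖ψ x‖
      have := hmem x hx
      linarith)
  refine ⟨fun v hv => ?_, h0⟩
  have h2 := hext v hv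
  linarith

lemma final_pos (k : ℕ) (hk : 2 ≤ k) (a b : ℝ) (hab : a < b) (δ : ℝ) (hδ : 0 < δ)
    (φ : ℝ → ℝ) (hφ : ContDiff ℝ (k + 1 : ℕ) φ)
    (hd : ∀ v ∈ Ioo a b, δ ≤ |iteratedDeriv k φ v|)
    (ψ : ℝ → ℂ) (hψ : ContDiff ℝ 1 ψ) (l : ℝ) (hl : 0 < l) :
    ‖∫ v in a..b, ψ v * Complex.exp (Complex.I * l * φ v)‖ ≤
      (max (b - a) (5 * 2 ^ (k - 1) - 2) /
        (min 1 (δ ^ ((1 : ℝ) / k)) * max 1 (|l| ^ ((1 : ℝ) / k)))) *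
        ((⨆ v ∈ Ioo a b, ‖ψ v‖) +
          ∫ v in a..b, ‖deriv ψ v‖) := by
  obtain ⟨hMIcc, hM0⟩ := sup_facts hψ.continuous hab
  set M := ⨆ v ∈ Ioo a b, ‖ψ v‖ with hM_def
  set I0 := ∫ v in a..b, ‖deriv ψ v‖ with hI0_def
  have hI00 : 0 ≤ I0 := by
    rw [hI0_def]
    apply integral_nonneg hab.le
    intro x _
    exact norm_nonneg _
  have hκ0 : (0:ℝ) < (k:ℝ) := by exact_mod_cast (by omega : 0 < k)
  have hek : (0:ℝ) < (1:ℝ)/(k:ℝ) := by positivity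
  have hCk : (3:ℝ) ≤ 5 * 2 ^ (k - 1) - 2 := by
    have h1 : (1:ℝ) ≤ 2 ^ (k - 1) := one_le_pow₀ (by norm_num)
    linarith
  have hmin0 : 0 < min 1 (δ ^ ((1 : ℝ) / k)) :=
    lt_min one_pos (Real.rpow_pos_of_pos hδ _)
  have hmax1 : (1:ℝ) ≤ max 1 (|l| ^ ((1 : ℝ) / k)) := le_max_left _ _
  have habs_l : |l| = l := abs_of_pos hl
  rcases le_or_gt l 1 with hl1 | hl1
  · -- small frequency: trivial bound
    have hmaxeq : max 1 (|l| ^ ((1 : ℝ) / k)) = 1 := by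
      rw [habs_l]
      exact max_eq_left (Real.rpow_le_one hl.le hl1 hek.le)
    have hLHS : ‖∫ v in a..b, ψ v * Complex.exp (Complex.I * l * φ v)‖
        ≤ M * (b - a) := by
      have hb := norm_integral_le_of_norm_le_const (C := M)
        (f := fun v => ψ v * Complex.exp (Complex.I * l * φ v)) (a := a) (b := b) ?_
      · rwa [abs_of_pos (by linarith : (0:ℝ) < b - a)] at hb
      · intro x hx
        rw [uIoc_of_le hab.le] at hx
        rw [norm_mul]
        have h1 : ‖Complex.exp (Complex.I * l * φ x)‖ = 1 := by
          exact osc_abs φ l x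
        rw [h1, mul_one]
        exact hMIcc x ⟨hx.1.le, hx.2⟩
    have hRHS : M * (b - a) ≤
        (max (b - a) (5 * 2 ^ (k - 1) - 2) /
          (min 1 (δ ^ ((1 : ℝ) / k)) * max 1 (|l| ^ ((1 : ℝ) / k)))) * (M + I0) := by
      rw [hmaxeq, mul_one]
      have h1 : b - a ≤ max (b - a) (5 * 2 ^ (k - 1) - 2) / min 1 (δ ^ ((1 : ℝ) / k)) := by
        rw [le_div_iff₀ hmin0]
        calc (b - a) * min 1 (δ ^ ((1 : ℝ) / k)) ≤ (b - a) * 1 :=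
              mul_le_mul_of_nonneg_left (min_le_left _ _) (by linarith)
          _ = b - a := mul_one _
          _ ≤ max (b - a) (5 * 2 ^ (k - 1) - 2) := le_max_left _ _
      calc M * (b - a) = (b - a) * M := mul_comm _ _
        _ ≤ (max (b - a) (5 * 2 ^ (k - 1) - 2) / min 1 (δ ^ ((1 : ℝ) / k))) * (M + I0) := by
            apply mul_le_mul h1 (by linarith) hM0
            positivity
    exact le_trans hLHS hRHS
  · -- large frequency: van der Corput
    set δ' := min 1 δ with hδ'_def
    have hδ'0 : 0 < δ' := lt_min one_pos hδ
    have hδ'δ : δ' ≤ δ := min_le_right _ _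
    have hd' : ∀ v ∈ Ioo a b, δ' ≤ |iteratedDeriv k φ v| :=
      fun v hv => le_trans hδ'δ (hd v hv)
    have hmaxeq : max 1 (|l| ^ ((1 : ℝ) / k)) = l ^ ((1 : ℝ) / k) := by
      rw [habs_l]
      exact max_eq_right (Real.one_le_rpow hl1.le hek.le)
    have hmineq : min 1 (δ ^ ((1 : ℝ) / k)) = δ' ^ ((1 : ℝ) / k) := by
      rcases le_or_gt δ 1 with hd1 | hd1
      · rw [hδ'_def, min_eq_right hd1]
        exact min_eq_right (Real.rpow_le_one hδ.le hd1 hek.le)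
      · rw [hδ'_def, min_eq_left hd1.le]
        rw [min_eq_left (Real.one_le_rpow hd1.le hek.le)]
        exact (Real.one_rpow _).symm
    have hD : min 1 (δ ^ ((1 : ℝ) / k)) * max 1 (|l| ^ ((1 : ℝ) / k))
        = (l * δ') ^ ((1 : ℝ) / k) := by
      rw [hmineq, hmaxeq, mul_comm (δ' ^ ((1:ℝ)/(k:ℝ))) (l ^ ((1:ℝ)/(k:ℝ))),
        ← Real.mul_rpow hl.le hδ'0.le]
    have hamp := vdc_amp k hk hφ hψ hab.le hδ'0 hl hd' hMIcc
    have hexp : (l * δ') ^ (-(1:ℝ)/(k:ℝ)) = ((l * δ') ^ ((1:ℝ)/(k:ℝ)))⁻¹ := by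
      rw [neg_div, Real.rpow_neg (by positivity)]
    have hfac : (5 * 2 ^ (k - 1) - 2) * (l * δ') ^ (-(1:ℝ)/(k:ℝ))
        ≤ max (b - a) (5 * 2 ^ (k - 1) - 2) /
          (min 1 (δ ^ ((1 : ℝ) / k)) * max 1 (|l| ^ ((1 : ℝ) / k))) := by
      rw [hD, hexp, ← div_eq_mul_inv]
      have hpos : (0:ℝ) < (l * δ') ^ ((1:ℝ)/(k:ℝ)) :=
        Real.rpow_pos_of_pos (mul_pos hl hδ'0) _
      exact (div_le_div_iff_of_pos_right hpos).mpr (le_max_right _ _)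
    calc ‖∫ v in a..b, ψ v * Complex.exp (Complex.I * l * φ v)‖
        ≤ ((5 * 2 ^ (k - 1) - 2) * (l * δ') ^ (-(1:ℝ)/(k:ℝ))) * (M + I0) := hamp
      _ ≤ (max (b - a) (5 * 2 ^ (k - 1) - 2) /
            (min 1 (δ ^ ((1 : ℝ) / k)) * max 1 (|l| ^ ((1 : ℝ) / k)))) * (M + I0) := by
          apply mul_le_mul_of_nonneg_right hfac (by linarith)

theorem stmt_4 (k : ℕ) (hk : 2 ≤ k) :
    ∃ c : ℝ, 0 < c ∧ ∀ (a b : ℝ), a < b → ∀ δ : ℝ, 0 < δ → ∀ φ : ℝ → ℝ,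
      ContDiff ℝ (k + 1 : ℕ) φ →
      (∀ v ∈ Set.Ioo a b, δ ≤ |iteratedDeriv k φ v|) →
      ∀ ψ : ℝ → ℂ, ContDiff ℝ 1 ψ →
      ∀ l : ℝ, l ≠ 0 →
      ‖∫ v in a..b, ψ v * Complex.exp (Complex.I * l * φ v)‖ ≤
        (max (b - a) c / (min 1 (δ ^ ((1 : ℝ) / k)) * max 1 (|l| ^ ((1 : ℝ) / k)))) *
          ((⨆ v ∈ Set.Ioo a b, ‖ψ v‖) +
            ∫ v in a..b, ‖deriv ψ v‖) := by
  refine ⟨5 * 2 ^ (k - 1) - 2, ?_, ?_⟩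
  · have h1 : (1:ℝ) ≤ 2 ^ (k - 1) := one_le_pow₀ (by norm_num)
    linarith
  intro a b hab δ hδ φ hφ hd ψ hψ l hl
  rcases lt_or_gt_of_ne hl with hneg | hpos
  · have hd' : ∀ v ∈ Ioo a b, δ ≤ |iteratedDeriv k (-φ) v| := by
      intro v hv
      rw [iteratedDeriv_neg'', abs_neg]
      exact hd v hv
    have h := final_pos k hk a b hab δ hδ (-φ) hφ.neg hd' ψ hψ (-l) (by linarith)
    have heq : (∫ v in a..b, ψ v * Complex.exp (Complex.I * ((-l : ℝ) : ℂ) * (((-φ) v : ℝ) : ℂ)))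
        = ∫ v in a..b, ψ v * Complex.exp (Complex.I * (l : ℂ) * ((φ v : ℝ) : ℂ)) := by
      apply integral_congr
      intro x _
      beta_reduce
      have e : Complex.I * ((-l : ℝ) : ℂ) * (((-φ) x : ℝ) : ℂ)
          = Complex.I * (l : ℂ) * ((φ x : ℝ) : ℂ) := by
        simp only [Pi.neg_apply, Complex.ofReal_neg]
        ring
      rw [e]
    rw [heq, abs_neg] at h
    exact h
  · exact final_pos k hk a b hab δ hδ φ hφ hd ψ hψ l hpos
end

section
/- Let a < b be real numbers, δ > 0, let φ : ℝ → ℝ be twice continuously differentiable with |φ'(v)| ≥ δ for all v ∈ (a,b), and let ψ : ℝ → ℂ be continuously differentiable. Set c̃₁ = 2 + δ^{−1}∫_a^b |φ''(v)| dv. Then for every real λ ≠ 0, |∫_a^b ψ(v) e^{iλφ(v)} dv| ≤ [max(b − a, c̃₁) / (min(1, δ) · max(1, |λ|))] · ( sup_{v∈(a,b)} |ψ(v)| + ∫_a^b |ψ'(v)| dv ). -/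
open MeasureTheory intervalIntegral

theorem stmt_5 (a b : ℝ) (hab : a < b) (δ : ℝ) (hδ : 0 < δ) (φ : ℝ → ℝ)
    (hφ : ContDiff ℝ 2 φ)
    (hder : ∀ v ∈ Set.Ioo a b, δ ≤ |deriv φ v|)
    (ψ : ℝ → ℂ) (hψ : ContDiff ℝ 1 ψ)
    (l : ℝ) (hl : l ≠ 0) :
    ‖∫ v in a..b, ψ v * Complex.exp (Complex.I * l * φ v)‖ ≤
      (max (b - a) (2 + δ⁻¹ * ∫ v in a..b, |deriv (deriv φ) v|) /
          (min 1 δ * max 1 |l|)) *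
        ((⨆ v ∈ Set.Ioo a b, ‖ψ v‖) +
          ∫ v in a..b, ‖deriv ψ v‖) := by
  have hφd : Differentiable ℝ φ := hφ.differentiable (by norm_num)
  have hφ'cd : ContDiff ℝ 1 (deriv φ) := by
    have h2 : ContDiff ℝ ((1 : ℕ) + 1) φ := by exact_mod_cast hφ
    exact (contDiff_succ_iff_deriv.mp h2).2.2
  have hφ'd : Differentiable ℝ (deriv φ) := hφ'cd.differentiable (by norm_num)
  have hφ'c : Continuous (deriv φ) := hφ'd.continuous
  have hφ''c : Continuous (deriv (deriv φ)) := hφ'cd.continuous_deriv le_rfl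
  have hψd : Differentiable ℝ ψ := hψ.differentiable (by norm_num)
  have hψc : Continuous ψ := hψd.continuous
  have hψ'c : Continuous (deriv ψ) := hψ.continuous_deriv le_rfl
  have hlpos : 0 < |l| := abs_pos.mpr hl
  -- derivative bound extends to Icc
  have hderIcc : ∀ v ∈ Set.Icc a b, δ ≤ |deriv φ v| := by
    intro v hv
    have hclosed : IsClosed {v : ℝ | δ ≤ |deriv φ v|} :=
      isClosed_le continuous_const hφ'c.abs
    have hsub : Set.Icc a b ⊆ {v : ℝ | δ ≤ |deriv φ v|} := by
      rw [← closure_Ioo hab.ne]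
      exact hclosed.closure_subset_iff.mpr hder
    exact hsub hv
  set E : ℝ → ℂ := fun v => Complex.exp (Complex.I * l * φ v) with hEdef
  set D : ℝ → ℂ := fun v => Complex.I * l * deriv φ v with hDdef
  have hEc : Continuous E := by
    apply Complex.continuous_exp.comp
    exact (continuous_const.mul (Complex.continuous_ofReal.comp hφd.continuous))
  have hDc : Continuous D :=
    continuous_const.mul (Complex.continuous_ofReal.comp hφ'c)
  have hEnorm : ∀ v, ‖E v‖ = 1 := by
    intro v
    have h1 : Complex.I * (l : ℂ) * ((φ v : ℝ) : ℂ) = ((l * φ v : ℝ) : ℂ) * Complex.I := by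
      push_cast; ring
    rw [hEdef]
    simp only [h1, Complex.norm_exp_ofReal_mul_I]
  have hDnorm : ∀ v, ‖D v‖ = |l| * |deriv φ v| := by
    intro v
    rw [hDdef]
    simp
  have hDne : ∀ v ∈ Set.Icc a b, D v ≠ 0 := by
    intro v hv
    intro h0
    have := hDnorm v
    rw [h0, norm_zero] at this
    have h1 : 0 < |l| * |deriv φ v| :=
      mul_pos hlpos (lt_of_lt_of_le hδ (hderIcc v hv))
    linarith
  have hE' : ∀ v, HasDerivAt E (D v * E v) v := by
    intro v
    have h1 : HasDerivAt (fun w : ℝ => ((φ w : ℝ) : ℂ)) ((deriv φ v : ℝ) : ℂ) v :=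
      ((hφd v).hasDerivAt).ofReal_comp
    have h2 : HasDerivAt (fun w : ℝ => Complex.I * l * ((φ w : ℝ) : ℂ))
        (Complex.I * l * ((deriv φ v : ℝ) : ℂ)) v := h1.const_mul _
    have h3 := h2.cexp
    rw [hEdef, hDdef]
    simpa [mul_comm] using h3
  have hD' : ∀ v, HasDerivAt D (Complex.I * l * deriv (deriv φ) v) v := by
    intro v
    exact ((hφ'd v).hasDerivAt).ofReal_comp.const_mul _
  set h : ℝ → ℂ := fun v => E v / D v with hhdef
  set G : ℝ → ℂ := fun v => E v * (Complex.I * l * deriv (deriv φ) v) / (D v) ^ 2 with hGdef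
  have hh' : ∀ v ∈ Set.Icc a b, HasDerivAt h (E v - G v) v := by
    intro v hv
    have hne := hDne v hv
    have := (hE' v).div (hD' v) hne
    refine this.congr_deriv ?_
    symm
    rw [hGdef]
    field_simp
  have hGcont : ContinuousOn G (Set.Icc a b) := by
    apply ContinuousOn.div
    · exact (hEc.mul (continuous_const.mul
        (Complex.continuous_ofReal.comp hφ''c))).continuousOn
    · exact (hDc.pow 2).continuousOn
    · intro v hv; exact pow_ne_zero 2 (hDne v hv)
  have hGnorm : ∀ v ∈ Set.Icc a b, ‖G v‖ ≤ |deriv (deriv φ) v| / (|l| * δ ^ 2) := by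
    intro v hv
    have hφ'v := hderIcc v hv
    have hφ'pos : 0 < |deriv φ v| := lt_of_lt_of_le hδ hφ'v
    have h1 : ‖G v‖ = (|l| * |deriv (deriv φ) v|) / ((|l| * |deriv φ v|) ^ 2) := by
      rw [hGdef]
      simp only [norm_div, norm_mul, norm_pow, hEnorm v, hDnorm v, Complex.norm_I,
        Complex.norm_real, Real.norm_eq_abs]
      ring_nf
    have h1' : ‖G v‖ = |deriv (deriv φ) v| / (|l| * |deriv φ v| ^ 2) := by
      rw [h1, mul_pow, div_eq_div_iff
        (by positivity : |l| ^ 2 * |deriv φ v| ^ 2 ≠ (0:ℝ))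
        (mul_pos hlpos (pow_pos hφ'pos 2)).ne']
      ring
    rw [h1']
    gcongr
  -- the primitive F of E
  set F : ℝ → ℂ := fun u => ∫ v in a..u, E v with hFdef
  have hF' : ∀ u, HasDerivAt F (E u) u := by
    intro u
    exact intervalIntegral.integral_hasDerivAt_right (hEc.intervalIntegrable a u)
      (hEc.stronglyMeasurableAtFilter _ _) hEc.continuousAt
  have hFc : Continuous F := continuous_iff_continuousAt.mpr fun u => (hF' u).continuousAt
  have hFa : F a = 0 := by rw [hFdef]; simp
  -- representation of F via integration by parts on [a,u]
  have hFrep : ∀ u ∈ Set.Icc a b, F u = h u - h a + ∫ v in a..u, G v := by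
    intro u hu
    have hsub : Set.uIcc a u ⊆ Set.Icc a b := by
      rw [Set.uIcc_of_le hu.1]
      exact Set.Icc_subset_Icc le_rfl hu.2
    have hGint : IntervalIntegrable G volume a u :=
      (hGcont.mono hsub).intervalIntegrable
    have hEint : IntervalIntegrable E volume a u := hEc.intervalIntegrable a u
    have h2 : (∫ v in a..u, (E v - G v)) = h u - h a :=
      intervalIntegral.integral_eq_sub_of_hasDerivAt
        (fun v hv => hh' v (hsub hv)) (hEint.sub hGint)
    have h3 : (∫ v in a..u, (E v - G v)) = (∫ v in a..u, E v) - ∫ v in a..u, G v :=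
      intervalIntegral.integral_sub hEint hGint
    rw [h3] at h2
    rw [hFdef]
    dsimp only
    linear_combination h2
  have hhnorm : ∀ v ∈ Set.Icc a b, ‖h v‖ ≤ 1 / (|l| * δ) := by
    intro v hv
    have hφ'v := hderIcc v hv
    have hφ'pos : 0 < |deriv φ v| := lt_of_lt_of_le hδ hφ'v
    have h1 : ‖h v‖ = 1 / (|l| * |deriv φ v|) := by
      rw [hhdef]
      simp only [norm_div, hEnorm v, hDnorm v]
    rw [h1]
    gcongr
  have hIφ'' : 0 ≤ ∫ v in a..b, |deriv (deriv φ) v| :=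
    intervalIntegral.integral_nonneg hab.le (fun _ _ => abs_nonneg _)
  set M : ℝ := (2 + δ⁻¹ * ∫ v in a..b, |deriv (deriv φ) v|) / (δ * |l|) with hMdef
  have hM0 : 0 ≤ M := by
    apply div_nonneg
    · have : 0 ≤ δ⁻¹ * ∫ v in a..b, |deriv (deriv φ) v| :=
        mul_nonneg (inv_nonneg.mpr hδ.le) hIφ''
      linarith
    · positivity
  have hFbound : ∀ u ∈ Set.Icc a b, ‖F u‖ ≤ M := by
    intro u hu
    rw [hFrep u hu]
    have hsub : Set.Icc a u ⊆ Set.Icc a b := Set.Icc_subset_Icc le_rfl hu.2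
    have hGint : IntervalIntegrable G volume a u :=
      (hGcont.mono (by rw [Set.uIcc_of_le hu.1]; exact hsub)).intervalIntegrable
    have step1 : ‖∫ v in a..u, G v‖ ≤ ∫ v in a..u, ‖G v‖ :=
      intervalIntegral.norm_integral_le_integral_norm hu.1
    have step2 : (∫ v in a..u, ‖G v‖) ≤ ∫ v in a..u, |deriv (deriv φ) v| / (|l| * δ ^ 2) := by
      apply intervalIntegral.integral_mono_on hu.1
      · exact (hGcont.mono hsub).norm.intervalIntegrable_of_Icc hu.1
      · exact ((hφ''c.abs.div_const _).intervalIntegrable a u)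
      · intro v hv; exact hGnorm v (hsub hv)
    have step3 : (∫ v in a..u, |deriv (deriv φ) v| / (|l| * δ ^ 2)) ≤
        ∫ v in a..b, |deriv (deriv φ) v| / (|l| * δ ^ 2) := by
      apply intervalIntegral.integral_mono_interval le_rfl hu.1 hu.2
      · filter_upwards with v
        positivity
      · exact (hφ''c.abs.div_const _).intervalIntegrable a b
    have step4 : (∫ v in a..b, |deriv (deriv φ) v| / (|l| * δ ^ 2)) =
        (∫ v in a..b, |deriv (deriv φ) v|) / (|l| * δ ^ 2) := by
      rw [intervalIntegral.integral_div]
    have hGle : ‖∫ v in a..u, G v‖ ≤ (∫ v in a..b, |deriv (deriv φ) v|) / (|l| * δ ^ 2) := by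
      rw [← step4]
      exact step1.trans (step2.trans step3)
    calc ‖h u - h a + ∫ v in a..u, G v‖
        ≤ ‖h u - h a‖ + ‖∫ v in a..u, G v‖ := norm_add_le _ _
      _ ≤ (‖h u‖ + ‖h a‖) + ‖∫ v in a..u, G v‖ := by
          gcongr; exact norm_sub_le _ _
      _ ≤ (1 / (|l| * δ) + 1 / (|l| * δ)) +
            (∫ v in a..b, |deriv (deriv φ) v|) / (|l| * δ ^ 2) := by
          gcongr
          · exact hhnorm u hu
          · exact hhnorm a ⟨le_rfl, hab.le⟩
      _ = M := by
          rw [hMdef]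
          field_simp
          ring
  -- sup bounds
  obtain ⟨K, hK⟩ : ∃ K, ∀ v ∈ Set.Icc a b, ‖ψ v‖ ≤ K := by
    obtain ⟨K, hK⟩ := (isCompact_Icc (a := a) (b := b)).exists_bound_of_continuousOn
      hψc.continuousOn
    exact ⟨K, fun v hv => by simpa using hK v hv⟩
  have hbdd : BddAbove (Set.range fun v => ⨆ _ : v ∈ Set.Ioo a b, ‖ψ v‖) := by
    refine ⟨max K 0, ?_⟩
    rintro x ⟨v, rfl⟩
    dsimp only
    by_cases hv : v ∈ Set.Ioo a b
    · haveI : Nonempty (v ∈ Set.Ioo a b) := ⟨hv⟩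
      rw [ciSup_const]
      exact le_max_of_le_left (hK v (Set.Ioo_subset_Icc_self hv))
    · haveI : IsEmpty (v ∈ Set.Ioo a b) := ⟨fun hx => hv hx⟩
      rw [Real.iSup_of_isEmpty]
      exact le_max_right _ _
  have hle_S : ∀ v ∈ Set.Ioo a b,
      ‖ψ v‖ ≤ ⨆ v ∈ Set.Ioo a b, ‖ψ v‖ := by
    intro v hv
    haveI : Nonempty (v ∈ Set.Ioo a b) := ⟨hv⟩
    calc ‖ψ v‖ = ⨆ _ : v ∈ Set.Ioo a b, ‖ψ v‖ := ciSup_const.symm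
      _ ≤ ⨆ v ∈ Set.Ioo a b, ‖ψ v‖ := le_ciSup hbdd v
  have hSb : ‖ψ b‖ ≤ ⨆ v ∈ Set.Ioo a b, ‖ψ v‖ := by
    have hbc : b ∈ closure (Set.Ioo a b) := by
      rw [closure_Ioo hab.ne]; exact ⟨hab.le, le_rfl⟩
    haveI hne : (nhdsWithin b (Set.Ioo a b)).NeBot :=
      mem_closure_iff_nhdsWithin_neBot.mp hbc
    have htend : Filter.Tendsto (fun v => ‖ψ v‖)
        (nhdsWithin b (Set.Ioo a b)) (nhds (‖ψ b‖)) :=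
      ((continuous_norm.comp hψc).continuousWithinAt)
    exact le_of_tendsto htend (Filter.eventually_of_mem self_mem_nhdsWithin hle_S)
  have hS0 : 0 ≤ ⨆ v ∈ Set.Ioo a b, ‖ψ v‖ := by
    have hmid : (a + b) / 2 ∈ Set.Ioo a b := ⟨by linarith, by linarith⟩
    exact le_trans (norm_nonneg _) (hle_S _ hmid)
  have hIψ' : 0 ≤ ∫ v in a..b, ‖deriv ψ v‖ :=
    intervalIntegral.integral_nonneg hab.le (fun _ _ => norm_nonneg _)
  set S : ℝ := ⨆ v ∈ Set.Ioo a b, ‖ψ v‖ with hSdef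
  set Iψ : ℝ := ∫ v in a..b, ‖deriv ψ v‖ with hIψdef
  set C : ℝ := max (b - a) (2 + δ⁻¹ * ∫ v in a..b, |deriv (deriv φ) v|) /
      (min 1 δ * max 1 |l|) with hCdef
  have hden : 0 < min 1 δ * max 1 |l| :=
    mul_pos (lt_min one_pos hδ) (lt_of_lt_of_le one_pos (le_max_left _ _))
  have hmaxnn : 0 ≤ max (b - a) (2 + δ⁻¹ * ∫ v in a..b, |deriv (deriv φ) v|) :=
    le_trans (by linarith) (le_max_left _ _)
  have hC0 : 0 ≤ C := div_nonneg hmaxnn hden.le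
  -- final goal in terms of norms
  rw [show ‖∫ v in a..b, ψ v * Complex.exp (Complex.I * l * φ v)‖ =
      ‖∫ v in a..b, ψ v * E v‖ by rw [hEdef]]
  rcases le_total |l| 1 with hl1 | hl1
  · -- small frequency: trivial bound
    have hmax1 : max 1 |l| = 1 := max_eq_left hl1
    have hbnd : ‖∫ v in a..b, ψ v * E v‖ ≤ S * |b - a| := by
      apply intervalIntegral.norm_integral_le_of_norm_le_const
      intro x hx
      rw [Set.uIoc_of_le hab.le] at hx
      have hx' : ‖ψ x‖ ≤ S := by
        rcases lt_or_eq_of_le hx.2 with hlt | heq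
        · exact hle_S x ⟨hx.1, hlt⟩
        · rw [heq]; exact hSb
      calc ‖ψ x * E x‖ = ‖ψ x‖ * ‖E x‖ := by
            rw [norm_mul]
        _ = ‖ψ x‖ := by rw [hEnorm x, mul_one]
        _ ≤ S := hx'
    have hCba : b - a ≤ C := by
      rw [hCdef, hmax1, mul_one]
      have h1 : min 1 δ ≤ 1 := min_le_left _ _
      have h2 : 0 < min 1 δ := lt_min one_pos hδ
      calc b - a ≤ max (b - a) (2 + δ⁻¹ * ∫ v in a..b, |deriv (deriv φ) v|) := le_max_left _ _
        _ = max (b - a) (2 + δ⁻¹ * ∫ v in a..b, |deriv (deriv φ) v|) / 1 := (div_one _).symm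
        _ ≤ max (b - a) (2 + δ⁻¹ * ∫ v in a..b, |deriv (deriv φ) v|) / min 1 δ := by
            gcongr
    calc ‖∫ v in a..b, ψ v * E v‖ ≤ S * |b - a| := hbnd
      _ = (b - a) * S := by rw [abs_of_nonneg (by linarith : (0:ℝ) ≤ b - a)]; ring
      _ ≤ C * S := mul_le_mul_of_nonneg_right hCba hS0
      _ ≤ C * (S + Iψ) := by nlinarith
  · -- large frequency: van der Corput
    have hmax1 : max 1 |l| = |l| := max_eq_right hl1
    -- integration by parts
    have hIBP : (∫ v in a..b, ψ v * E v) =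
        ψ b * F b - ψ a * F a - ∫ v in a..b, deriv ψ v * F v :=
      intervalIntegral.integral_mul_deriv_eq_deriv_mul
        (fun x _ => (hψd x).hasDerivAt) (fun x _ => hF' x)
        (hψ'c.intervalIntegrable a b) (hEc.intervalIntegrable a b)
    rw [hIBP, hFa, mul_zero, sub_zero]
    have hterm2 : ‖∫ v in a..b, deriv ψ v * F v‖ ≤ Iψ * M := by
      have s1 : ‖∫ v in a..b, deriv ψ v * F v‖ ≤ ∫ v in a..b, ‖deriv ψ v * F v‖ :=
        intervalIntegral.norm_integral_le_integral_norm hab.le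
      have s2 : (∫ v in a..b, ‖deriv ψ v * F v‖) ≤ ∫ v in a..b, ‖deriv ψ v‖ * M := by
        apply intervalIntegral.integral_mono_on hab.le
        · exact ((hψ'c.mul hFc).norm.intervalIntegrable a b)
        · exact ((continuous_norm.comp hψ'c).mul continuous_const).intervalIntegrable a b
        · intro v hv
          rw [norm_mul]
          rw [show ‖deriv ψ v‖ = ‖deriv ψ v‖ from rfl]
          exact mul_le_mul_of_nonneg_left (hFbound v hv) (norm_nonneg _)
      have s3 : (∫ v in a..b, ‖deriv ψ v‖ * M) = Iψ * M := by
        rw [hIψdef, intervalIntegral.integral_mul_const]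
      calc ‖∫ v in a..b, deriv ψ v * F v‖ ≤ _ := s1
        _ ≤ _ := s2
        _ = Iψ * M := s3
    have hMC : M ≤ C := by
      rw [hMdef, hCdef, hmax1]
      apply div_le_div₀ hmaxnn (le_max_right _ _) (by positivity)
      exact mul_le_mul_of_nonneg_right (min_le_right _ _) hlpos.le
    calc ‖ψ b * F b - ∫ v in a..b, deriv ψ v * F v‖
        ≤ ‖ψ b * F b‖ + ‖∫ v in a..b, deriv ψ v * F v‖ := norm_sub_le _ _
      _ ≤ S * M + Iψ * M := by
          have h1 : ‖ψ b * F b‖ ≤ S * M := by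
            rw [norm_mul, show ‖ψ b‖ = ‖ψ b‖ from rfl]
            exact mul_le_mul hSb (hFbound b ⟨hab.le, le_rfl⟩) (norm_nonneg _) hS0
          exact add_le_add h1 hterm2
      _ = M * (S + Iψ) := by ring
      _ ≤ C * (S + Iψ) := mul_le_mul_of_nonneg_right hMC (by linarith)
end

section
/- Let N ≥ 1 be an integer and define b : ℝ → ℝ^{N+1} by b(v) = (1, v, v², …, v^N). Then for every v ∈ ℝ and every σ ∈ ℝ^{N+1} with ‖σ‖ = 1, one has Σ_{k=0}^{N} |⟨b^{(k)}(v), σ⟩| > 0, where b^{(k)} denotes the k-th componentwise derivative of b. In other words, for each v the vectors b(v), b'(v), …, b^{(N)}(v) span ℝ^{N+1}, so the non-degeneracy condition ((N+1)ND) holds for this field; hence the minimal value γ = N+1 allowed by the previous obstruction is attained. -/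
theorem stmt_8 (N : ℕ) (hN : 1 ≤ N) :
    ∀ (v : ℝ) (σ : Fin (N + 1) → ℝ), (∑ i, σ i ^ 2 = 1) →
      0 < ∑ k ∈ Finset.range (N + 1),
        |∑ i, (iteratedDeriv k
          (fun w : ℝ => (fun i : Fin (N + 1) => w ^ (i : ℕ))) v) i * σ i| := by
  intro v σ hσ
  set F : ℝ → (Fin (N + 1) → ℝ) := fun w => fun i : Fin (N + 1) => w ^ (i : ℕ) with hF
  have hFsmooth : ContDiff ℝ (⊤ : ℕ∞) F := contDiff_pi.2 fun i => contDiff_id.pow _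
  have key : ∀ (k : ℕ) (i : Fin (N + 1)),
      (iteratedDeriv k F v) i
        = (∏ j ∈ Finset.range k, ((i : ℝ) - j)) * v ^ ((i : ℕ) - k) := by
    intro k i
    have hproj :
        (iteratedDeriv k F v) i = iteratedDeriv k (fun w => w ^ (i : ℕ)) v := by
      have h := (ContinuousLinearMap.proj (R := ℝ)
          (φ := fun _ : Fin (N + 1) => ℝ) i).iteratedFDeriv_comp_left
          (hFsmooth.contDiffAt (x := v)) (i := k) (mod_cast le_top)
      have h2 : iteratedDeriv k (fun w => F w i) v
          = iteratedDeriv k F v i := by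
        rw [iteratedDeriv_eq_iteratedFDeriv, iteratedDeriv_eq_iteratedFDeriv]
        have : (fun w => F w i)
            = (ContinuousLinearMap.proj (R := ℝ)
                (φ := fun _ : Fin (N + 1) => ℝ) i) ∘ F := rfl
        rw [this, h]
        rfl
      exact h2.symm
    rw [hproj, iteratedDeriv_eq_iterate, iter_deriv_pow]
  -- suppose the sum is zero; then each term vanishes
  rcases (lt_or_eq_of_le (Finset.sum_nonneg fun k _ => abs_nonneg
    (∑ i, (iteratedDeriv k F v) i * σ i))) with h | h
  · exact h
  · exfalso
    have hzero : ∀ k ∈ Finset.range (N + 1),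
        (∑ i, (iteratedDeriv k F v) i * σ i) = 0 := by
      intro k hk
      have := (Finset.sum_eq_zero_iff_of_nonneg
        (fun k _ => abs_nonneg (∑ i, (iteratedDeriv k F v) i * σ i))).1 h.symm k hk
      exact abs_eq_zero.1 this
    -- show σ = 0 by downward induction
    have hsz : ∀ d : ℕ, ∀ i : Fin (N + 1), (N : ℕ) - (i : ℕ) = d → σ i = 0 := by
      intro d
      induction d using Nat.strong_induction_on with
      | _ d ih =>
        intro i hi
        have hik : (i : ℕ) < N + 1 := i.2
        have heq := hzero (i : ℕ) (Finset.mem_range.2 hik)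
        -- split the sum at index i
        have hterm : ∀ j : Fin (N + 1), j ≠ i →
            (iteratedDeriv (i : ℕ) F v) j * σ j = 0 := by
          intro j hj
          rcases lt_or_gt_of_ne (fun hc : (j : ℕ) = (i : ℕ) => hj (Fin.ext hc)) with hlt | hgt
          · -- j < i : derivative vanishes
            rw [key]
            have : (∏ m ∈ Finset.range (i : ℕ), ((j : ℝ) - m)) = 0 :=
              Finset.prod_eq_zero (Finset.mem_range.2 hlt) (by simp)
            rw [this, zero_mul, zero_mul]
          · -- j > i : σ j = 0 by induction hypothesis
            have hjd : (N : ℕ) - (j : ℕ) < d := by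
              have hjN : (j : ℕ) ≤ N := Nat.lt_succ_iff.1 j.2
              omega
            rw [ih _ hjd j rfl, mul_zero]
        rw [Finset.sum_eq_single i (fun j _ hj => hterm j hj)
          (fun hc => absurd (Finset.mem_univ i) hc)] at heq
        have hd : (iteratedDeriv (i : ℕ) F v) i ≠ 0 := by
          rw [key, Nat.sub_self, pow_zero, mul_one]
          apply Finset.prod_ne_zero_iff.2
          intro m hm
          have := Finset.mem_range.1 hm
          have : (m : ℝ) < (i : ℕ) := by exact_mod_cast this
          linarith
        exact (mul_eq_zero.1 heq).resolve_left hd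
    have hall : ∀ i : Fin (N + 1), σ i = 0 := fun i => hsz _ i rfl
    rw [Finset.sum_eq_zero (fun i _ => by rw [hall i]; ring)] at hσ
    exact one_ne_zero hσ.symm
end

section
/- Let a < b be real numbers, let m ≥ 1 be an integer, and let φ : ℝ → ℝ be m-times continuously differentiable. Assume that for every v ∈ [a,b] there exists an integer j with 0 ≤ j ≤ m such that φ^{(j)}(v) ≠ 0. Then there exists a constant C > 0 such that for every ε > 0, meas{ v ∈ [a,b] : |φ(v)| ≤ ε } ≤ C·ε^{1/m}. -/
open MeasureTheory Set

lemma baseB {h : ℝ → ℝ} {I : Set ℝ} (hI : Convex ℝ I) (hd : Differentiable ℝ h)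
    (hlow : ∀ v ∈ I, 1 ≤ |deriv h v|) {ε : ℝ} (hε : 0 ≤ ε) :
    volume {v | v ∈ I ∧ |h v| ≤ ε} ≤ ENNReal.ofReal (2 * ε) := by
  have key : ∀ x ∈ I, ∀ y ∈ I, x < y → y - x ≤ |h y - h x| := by
    intro x hx y hy hxy
    obtain ⟨c, hc, hc2⟩ := exists_deriv_eq_slope h hxy hd.continuous.continuousOn
      hd.differentiableOn
    have hcI : c ∈ I := hI.ordConnected.out hx hy (Ioo_subset_Icc_self hc)
    have h1 : 1 ≤ |deriv h c| := hlow c hcI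
    rw [hc2, abs_div] at h1
    have hyx : |y - x| = y - x := abs_of_pos (by linarith)
    rw [hyx] at h1
    have := (le_div_iff₀ (by linarith : (0:ℝ) < y - x)).mp h1
    linarith
  refine (Real.volume_le_diam _).trans ?_
  refine EMetric.diam_le ?_
  rintro x ⟨hxI, hxε⟩ y ⟨hyI, hyε⟩
  have hxy : |x - y| ≤ 2 * ε := by
    rcases lt_trichotomy x y with hlt | heq | hgt
    · have := key x hxI y hyI hlt
      have h2 : |h y - h x| ≤ 2 * ε := by
        calc |h y - h x| ≤ |h y| + |h x| := abs_sub _ _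
        _ ≤ 2 * ε := by linarith
      rw [abs_sub_comm]
      rw [abs_of_pos (by linarith : (0:ℝ) < y - x)]
      linarith
    · simp only [heq, sub_self, abs_zero]; positivity
    · have := key y hyI x hxI hgt
      have h2 : |h x - h y| ≤ 2 * ε := by
        calc |h x - h y| ≤ |h x| + |h y| := abs_sub _ _
        _ ≤ 2 * ε := by linarith
      rw [abs_of_pos (by linarith : (0:ℝ) < x - y)]
      linarith
  rw [edist_dist, Real.dist_eq]
  exact ENNReal.ofReal_le_ofReal hxy

lemma iterDeriv_cmul {n : ℕ} {f : ℝ → ℝ} (hf : ContDiff ℝ (n : ℕ) f) (c : ℝ) (x : ℝ) :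
    iteratedDeriv n (fun z => c * f z) x = c * iteratedDeriv n f x := by
  rw [← iteratedDerivWithin_univ, ← iteratedDerivWithin_univ]
  exact iteratedDerivWithin_const_mul (Set.mem_univ x) uniqueDiffOn_univ c hf.contDiffWithinAt

lemma convex_ray_lt {g : ℝ → ℝ} {I : Set ℝ} (hI : Convex ℝ I)
    (hg : MonotoneOn g I ∨ AntitoneOn g I) (δ : ℝ) :
    Convex ℝ {v | v ∈ I ∧ g v < δ} := by
  rw [convex_iff_ordConnected]
  constructor
  rintro x ⟨hxI, hxg⟩ z ⟨hzI, hzg⟩ y ⟨hxy, hyz⟩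
  have hyI : y ∈ I := hI.ordConnected.out hxI hzI ⟨hxy, hyz⟩
  refine ⟨hyI, ?_⟩
  rcases hg with hg | hg
  · exact lt_of_le_of_lt (hg hyI hzI hyz) hzg
  · exact lt_of_le_of_lt (hg hxI hyI hxy) hxg

lemma convex_ray_gt {g : ℝ → ℝ} {I : Set ℝ} (hI : Convex ℝ I)
    (hg : MonotoneOn g I ∨ AntitoneOn g I) (δ : ℝ) :
    Convex ℝ {v | v ∈ I ∧ δ < g v} := by
  rw [convex_iff_ordConnected]
  constructor
  rintro x ⟨hxI, hxg⟩ z ⟨hzI, hzg⟩ y ⟨hxy, hyz⟩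
  have hyI : y ∈ I := hI.ordConnected.out hxI hzI ⟨hxy, hyz⟩
  refine ⟨hyI, ?_⟩
  rcases hg with hg | hg
  · exact lt_of_lt_of_le hxg (hg hxI hyI hxy)
  · exact lt_of_lt_of_le hzg (hg hyI hzI hyz)

lemma mono_or_anti {g : ℝ → ℝ} {I : Set ℝ} (hI : Convex ℝ I)
    (hgd : Differentiable ℝ g) (hgc : Continuous (deriv g))
    (hlow : ∀ v ∈ I, 1 ≤ |deriv g v|) :
    MonotoneOn g I ∨ AntitoneOn g I := by
  have hsign : (∀ v ∈ I, 0 < deriv g v) ∨ (∀ v ∈ I, deriv g v < 0) := by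
    by_contra hcon
    push_neg at hcon
    obtain ⟨⟨x, hxI, hx⟩, ⟨y, hyI, hy⟩⟩ := hcon
    have h0 : (0:ℝ) ∈ uIcc (deriv g x) (deriv g y) := by
      rw [Set.mem_uIcc]; left; exact ⟨hx, hy⟩
    obtain ⟨z, hz, hz0⟩ := intermediate_value_uIcc (hgc.continuousOn) h0
    have hzI : z ∈ I := hI.ordConnected.uIcc_subset hxI hyI hz
    have := hlow z hzI
    rw [hz0] at this
    simp at this; linarith
  rcases hsign with hs | hs
  · left
    exact (StrictMonoOn.monotoneOn (strictMonoOn_of_deriv_pos hI hgd.continuous.continuousOn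
      (fun v hv => hs v (interior_subset hv))))
  · right
    exact (StrictAntiOn.antitoneOn (strictAntiOn_of_deriv_neg hI hgd.continuous.continuousOn
      (fun v hv => hs v (interior_subset hv))))

lemma mainL : ∀ k : ℕ, ∀ {φ : ℝ → ℝ} {I : Set ℝ}, Convex ℝ I →
    ContDiff ℝ ((k + 1 : ℕ) : ℕ) φ →
    (∀ v ∈ I, 1 ≤ |iteratedDeriv (k + 1) φ v|) → ∀ ε : ℝ, 0 < ε →
    volume {v | v ∈ I ∧ |φ v| ≤ ε} ≤
      ENNReal.ofReal ((3:ℝ) ^ (k + 1) * ε ^ ((1:ℝ) / (k + 1))) := by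
  intro k
  induction k with
  | zero =>
    intro φ I hI hφ hlow ε hε
    have h1 : volume {v | v ∈ I ∧ |φ v| ≤ ε} ≤ ENNReal.ofReal (2 * ε) := by
      apply baseB hI (hφ.differentiable (by simp)) _ hε.le
      intro v hv; simpa [iteratedDeriv_one] using hlow v hv
    refine h1.trans (ENNReal.ofReal_le_ofReal ?_)
    have : ((1:ℝ) / ((0:ℕ) + 1)) = 1 := by norm_num
    rw [this, Real.rpow_one]
    norm_num; linarith
  | succ k ih =>
    intro φ I hI hφ hlow ε hε
    set g := iteratedDeriv (k + 1) φ with hgdef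
    have hφk : ContDiff ℝ ((k + 1 : ℕ) : ℕ) φ :=
      hφ.of_le (by exact_mod_cast Nat.le_succ (k+1))
    have hgd : Differentiable ℝ g :=
      hφ.differentiable_iteratedDeriv (k + 1) (by exact_mod_cast Nat.lt_succ_self (k + 1))
    have hgderiv : ∀ v, deriv g v = iteratedDeriv (k + 2) φ v := by
      intro v; rw [iteratedDeriv_succ]
    have hgc : Continuous (deriv g) := by
      have : deriv g = iteratedDeriv (k + 2) φ := funext hgderiv
      rw [this]
      exact hφ.continuous_iteratedDeriv (k + 2) (by exact_mod_cast le_refl (k+2))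
    have hlow' : ∀ v ∈ I, 1 ≤ |deriv g v| := by
      intro v hv; rw [hgderiv v]; exact hlow v hv
    have hmono := mono_or_anti hI hgd hgc hlow'
    set δ := ε ^ ((1:ℝ) / (k + 2)) with hδdef
    have hδ : 0 < δ := Real.rpow_pos_of_pos hε _
    -- the three pieces
    have hMbound : volume {v | v ∈ I ∧ |g v| ≤ δ} ≤ ENNReal.ofReal (2 * δ) :=
      baseB hI hgd hlow' hδ.le
    -- scaled function for IH
    have hψcd : ContDiff ℝ ((k + 1 : ℕ) : ℕ) (fun z => δ⁻¹ * φ z) :=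
      contDiff_const.mul hφk
    have hψd : ∀ v, iteratedDeriv (k + 1) (fun z => δ⁻¹ * φ z) v = δ⁻¹ * g v := by
      intro v; exact iterDeriv_cmul hφk δ⁻¹ v
    have hscale : ∀ (J : Set ℝ), (∀ v ∈ J, δ ≤ |g v|) → Convex ℝ J →
        volume {v | v ∈ J ∧ |φ v| ≤ ε} ≤
          ENNReal.ofReal ((3:ℝ) ^ (k + 1) * (ε / δ) ^ ((1:ℝ) / (k + 1))) := by
      intro J hJlow hJconv
      have hlow2 : ∀ v ∈ J, 1 ≤ |iteratedDeriv (k + 1) (fun z => δ⁻¹ * φ z) v| := by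
        intro v hv
        rw [hψd v, abs_mul, abs_of_pos (inv_pos.mpr hδ)]
        calc (1:ℝ) = δ⁻¹ * δ := (inv_mul_cancel₀ hδ.ne').symm
        _ ≤ δ⁻¹ * |g v| := by
            exact mul_le_mul_of_nonneg_left (hJlow v hv) (inv_pos.mpr hδ).le
      have heq : {v | v ∈ J ∧ |(fun z => δ⁻¹ * φ z) v| ≤ ε / δ} = {v | v ∈ J ∧ |φ v| ≤ ε} := by
        ext v
        simp only [Set.mem_setOf_eq, and_congr_right_iff]
        intro _
        rw [abs_mul, abs_of_pos (inv_pos.mpr hδ), div_eq_inv_mul]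
        exact mul_le_mul_iff_right₀ (inv_pos.mpr hδ)
      have := ih hJconv hψcd hlow2 (ε / δ) (div_pos hε hδ)
      rwa [heq] at this
    set I₁ := {v | v ∈ I ∧ g v < -δ} with hI₁def
    set I₂ := {v | v ∈ I ∧ δ < g v} with hI₂def
    have hb1 : volume {v | v ∈ I₁ ∧ |φ v| ≤ ε} ≤
        ENNReal.ofReal ((3:ℝ) ^ (k + 1) * (ε / δ) ^ ((1:ℝ) / (k + 1))) := by
      apply hscale
      · rintro v ⟨_, hv2⟩
        rw [abs_of_neg (by linarith)]; linarith
      · exact convex_ray_lt hI hmono (-δ)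
    have hb2 : volume {v | v ∈ I₂ ∧ |φ v| ≤ ε} ≤
        ENNReal.ofReal ((3:ℝ) ^ (k + 1) * (ε / δ) ^ ((1:ℝ) / (k + 1))) := by
      apply hscale
      · rintro v ⟨_, hv2⟩
        rw [abs_of_pos (by linarith)]; linarith
      · exact convex_ray_gt hI hmono δ
    have hcover : {v | v ∈ I ∧ |φ v| ≤ ε} ⊆
        {v | v ∈ I ∧ |g v| ≤ δ} ∪ ({v | v ∈ I₁ ∧ |φ v| ≤ ε} ∪ {v | v ∈ I₂ ∧ |φ v| ≤ ε}) := by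
      rintro v ⟨hvI, hvφ⟩
      rcases le_or_gt (|g v|) δ with h1 | h1
      · exact Or.inl ⟨hvI, h1⟩
      · rcases lt_abs.mp h1 with h2 | h2
        · exact Or.inr (Or.inr ⟨⟨hvI, h2⟩, hvφ⟩)
        · exact Or.inr (Or.inl ⟨⟨hvI, by linarith⟩, hvφ⟩)
    have htotal : volume {v | v ∈ I ∧ |φ v| ≤ ε} ≤
        ENNReal.ofReal (2 * δ) +
          (ENNReal.ofReal ((3:ℝ) ^ (k + 1) * (ε / δ) ^ ((1:ℝ) / (k + 1))) +
           ENNReal.ofReal ((3:ℝ) ^ (k + 1) * (ε / δ) ^ ((1:ℝ) / (k + 1)))) := by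
      refine (measure_mono hcover).trans ?_
      refine (measure_union_le _ _).trans ?_
      exact add_le_add hMbound ((measure_union_le _ _).trans (add_le_add hb1 hb2))
    refine htotal.trans ?_
    rw [← ENNReal.ofReal_add (by positivity) (by positivity),
        ← ENNReal.ofReal_add (by positivity) (by positivity)]
    apply ENNReal.ofReal_le_ofReal
    have hkey : (ε / δ) ^ ((1:ℝ) / (k + 1)) = δ := by
      have h1 : ε / δ = ε ^ (1 - (1:ℝ) / (k + 2)) := by
        rw [Real.rpow_sub hε, Real.rpow_one, hδdef]
      rw [h1, ← Real.rpow_mul hε.le, hδdef]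
      congr 1
      have hk1 : (k:ℝ) + 1 ≠ 0 := by positivity
      have hk2 : (k:ℝ) + 2 ≠ 0 := by positivity
      field_simp
      ring
    rw [hkey]
    have hexp : (1:ℝ) / (↑(k+1) + 1) = 1 / ((k:ℝ) + 2) := by push_cast; ring_nf
    rw [hexp, ← hδdef]
    have h3 : (2:ℝ) ≤ 3 ^ (k+1) := by
      calc (2:ℝ) ≤ 3 := by norm_num
      _ ≤ 3 ^ (k+1) := le_self_pow₀ (by norm_num) (Nat.succ_ne_zero k)
    have hp : (3:ℝ) ^ (k+1+1) = 3 * 3 ^ (k+1) := by ring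
    nlinarith [hδ.le, hp, mul_le_mul_of_nonneg_right h3 hδ.le]

lemma perBall {φ : ℝ → ℝ} {I : Set ℝ} (hI : Convex ℝ I) {m : ℕ} (hm : 1 ≤ m)
    (hφ : ContDiff ℝ (m : ℕ) φ) {j : ℕ} (hj : j ≤ m) {c : ℝ} (hc : 0 < c)
    (hlow : ∀ v ∈ I, c ≤ |iteratedDeriv j φ v|) :
    ∃ C : ℝ, 0 < C ∧ ∀ ε : ℝ, 0 < ε → ε ≤ c / 2 →
      volume {v | v ∈ I ∧ |φ v| ≤ ε} ≤ ENNReal.ofReal (C * ε ^ ((1:ℝ) / m)) := by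
  rcases Nat.eq_zero_or_pos j with hj0 | hjpos
  · refine ⟨1, one_pos, fun ε hε hεc => ?_⟩
    have hempty : {v | v ∈ I ∧ |φ v| ≤ ε} = ∅ := by
      ext v
      simp only [Set.mem_setOf_eq, Set.mem_empty_iff_false, iff_false, not_and, not_le]
      intro hvI
      have := hlow v hvI
      rw [hj0, iteratedDeriv_zero] at this
      linarith
    rw [hempty]
    simp
  · obtain ⟨j', rfl⟩ : ∃ j', j = j' + 1 := ⟨j - 1, by omega⟩
    refine ⟨3 ^ (j' + 1) / c ^ ((1:ℝ) / m), by positivity, fun ε hε hεc => ?_⟩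
    have hφj : ContDiff ℝ ((j' + 1 : ℕ) : ℕ) φ := hφ.of_le (by exact_mod_cast hj)
    have hψ : ContDiff ℝ ((j' + 1 : ℕ) : ℕ) (fun z => c⁻¹ * φ z) := contDiff_const.mul hφj
    have hlow2 : ∀ v ∈ I, 1 ≤ |iteratedDeriv (j' + 1) (fun z => c⁻¹ * φ z) v| := by
      intro v hv
      rw [iterDeriv_cmul hφj c⁻¹ v, abs_mul, abs_of_pos (inv_pos.mpr hc)]
      calc (1:ℝ) = c⁻¹ * c := (inv_mul_cancel₀ hc.ne').symm
      _ ≤ c⁻¹ * |iteratedDeriv (j' + 1) φ v| :=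
          mul_le_mul_of_nonneg_left (hlow v hv) (inv_pos.mpr hc).le
    have hb := mainL j' hI hψ hlow2 (ε / c) (div_pos hε hc)
    have heq : {v | v ∈ I ∧ |(fun z => c⁻¹ * φ z) v| ≤ ε / c} = {v | v ∈ I ∧ |φ v| ≤ ε} := by
      ext v
      simp only [Set.mem_setOf_eq, and_congr_right_iff]
      intro _
      rw [abs_mul, abs_of_pos (inv_pos.mpr hc), div_eq_inv_mul]
      exact mul_le_mul_iff_right₀ (inv_pos.mpr hc)
    rw [heq] at hb
    refine hb.trans (ENNReal.ofReal_le_ofReal ?_)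
    have hεc1 : ε / c ≤ 1 := by rw [div_le_one hc]; linarith
    have h1 : (ε / c) ^ ((1:ℝ) / (j' + 1)) ≤ (ε / c) ^ ((1:ℝ) / m) := by
      apply Real.rpow_le_rpow_of_exponent_ge (div_pos hε hc) hεc1
      apply one_div_le_one_div_of_le (by positivity)
      exact_mod_cast hj
    have h2 : (ε / c) ^ ((1:ℝ) / m) = ε ^ ((1:ℝ) / m) / c ^ ((1:ℝ) / m) :=
      Real.div_rpow hε.le hc.le _
    calc (3:ℝ) ^ (j' + 1) * (ε / c) ^ ((1:ℝ) / (j' + 1))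
        ≤ (3:ℝ) ^ (j' + 1) * (ε / c) ^ ((1:ℝ) / m) :=
          mul_le_mul_of_nonneg_left h1 (by positivity)
      _ = 3 ^ (j' + 1) / c ^ ((1:ℝ) / m) * ε ^ ((1:ℝ) / m) := by rw [h2]; ring

theorem stmt_9 (a b : ℝ) (hab : a < b) (m : ℕ) (hm : 1 ≤ m) (φ : ℝ → ℝ)
    (hφ : ContDiff ℝ (m : ℕ) φ)
    (h : ∀ v ∈ Set.Icc a b, ∃ j ≤ m, iteratedDeriv j φ v ≠ 0) :
    ∃ C : ℝ, 0 < C ∧ ∀ ε : ℝ, 0 < ε →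
      volume {v : ℝ | v ∈ Set.Icc a b ∧ |φ v| ≤ ε} ≤
        ENNReal.ofReal (C * ε ^ ((1 : ℝ) / m)) := by
  have key : ∀ v ∈ Set.Icc a b, ∃ r > 0, ∃ c > 0, ∃ C > 0, ∀ ε : ℝ, 0 < ε → ε ≤ c →
      volume {u | u ∈ Metric.ball v r ∧ |φ u| ≤ ε} ≤ ENNReal.ofReal (C * ε ^ ((1:ℝ) / m)) := by
    intro v hv
    obtain ⟨j, hj, hne⟩ := h v hv
    have habs : 0 < |iteratedDeriv j φ v| := abs_pos.mpr hne
    set c0 := |iteratedDeriv j φ v| / 2 with hc0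
    have hc0pos : 0 < c0 := by positivity
    have hcont : Continuous (iteratedDeriv j φ) :=
      hφ.continuous_iteratedDeriv j (by exact_mod_cast hj)
    have hopen : IsOpen {u | c0 < |iteratedDeriv j φ u|} :=
      isOpen_lt continuous_const hcont.abs
    have hvmem : v ∈ {u | c0 < |iteratedDeriv j φ u|} := by
      simp only [Set.mem_setOf_eq, hc0]; linarith
    obtain ⟨r, hr, hball⟩ := Metric.isOpen_iff.mp hopen v hvmem
    obtain ⟨C, hC, hCb⟩ := perBall (convex_ball v r) hm hφ hj hc0pos
      (fun u hu => (hball hu).le)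
    exact ⟨r, hr, c0 / 2, by linarith, C, hC, fun ε hε hεc => hCb ε hε (by linarith)⟩
  choose! r hr c hc C hC hbound using key
  obtain ⟨t, htsub, htcover⟩ := isCompact_Icc.elim_nhds_subcover
    (fun v => Metric.ball v (r v)) (fun v hv => Metric.ball_mem_nhds v (hr v hv))
  have htne : t.Nonempty := by
    rcases Finset.eq_empty_or_nonempty t with rfl | hne
    · exfalso
      have := htcover (Set.left_mem_Icc.mpr hab.le)
      simpa using this
    · exact hne
  set ε₀ := t.inf' htne c with hε₀def
  have hε₀ : 0 < ε₀ := by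
    rw [hε₀def, Finset.lt_inf'_iff]
    exact fun v hv => hc v (htsub v hv)
  set S := ∑ v ∈ t, C v with hSdef
  have hS : 0 < S := Finset.sum_pos (fun v hv => hC v (htsub v hv)) htne
  set D := max S ((b - a) / ε₀ ^ ((1:ℝ) / m)) with hDdef
  refine ⟨D, lt_of_lt_of_le hS (le_max_left _ _), fun ε hε => ?_⟩
  rcases le_or_gt ε ε₀ with hcase | hcase
  · have hsub : {v : ℝ | v ∈ Set.Icc a b ∧ |φ v| ≤ ε} ⊆
        ⋃ v ∈ t, {u | u ∈ Metric.ball v (r v) ∧ |φ u| ≤ ε} := by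
      rintro u ⟨huI, huφ⟩
      obtain ⟨v, hvt, hvball⟩ := Set.mem_iUnion₂.mp (htcover huI)
      exact Set.mem_iUnion₂.mpr ⟨v, hvt, hvball, huφ⟩
    calc volume {v : ℝ | v ∈ Set.Icc a b ∧ |φ v| ≤ ε}
        ≤ ∑ v ∈ t, volume {u | u ∈ Metric.ball v (r v) ∧ |φ u| ≤ ε} :=
          (measure_mono hsub).trans (measure_biUnion_finset_le t _)
      _ ≤ ∑ v ∈ t, ENNReal.ofReal (C v * ε ^ ((1:ℝ) / m)) :=
          Finset.sum_le_sum fun v hv =>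
            hbound v (htsub v hv) ε hε (hcase.trans (Finset.inf'_le c hv))
      _ = ENNReal.ofReal (∑ v ∈ t, C v * ε ^ ((1:ℝ) / m)) :=
          (ENNReal.ofReal_sum_of_nonneg (fun v hv => mul_nonneg (hC v (htsub v hv)).le (Real.rpow_nonneg hε.le _))).symm
      _ ≤ ENNReal.ofReal (D * ε ^ ((1:ℝ) / m)) := by
          apply ENNReal.ofReal_le_ofReal
          rw [← Finset.sum_mul]
          exact mul_le_mul_of_nonneg_right (le_max_left _ _) (by positivity)
  · have hm0 : (0:ℝ) < ε₀ ^ ((1:ℝ) / m) := Real.rpow_pos_of_pos hε₀ _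
    have hr1 : ε₀ ^ ((1:ℝ) / m) ≤ ε ^ ((1:ℝ) / m) :=
      Real.rpow_le_rpow hε₀.le hcase.le (by positivity)
    calc volume {v : ℝ | v ∈ Set.Icc a b ∧ |φ v| ≤ ε}
        ≤ volume (Set.Icc a b) := measure_mono (fun u hu => hu.1)
      _ = ENNReal.ofReal (b - a) := Real.volume_Icc
      _ ≤ ENNReal.ofReal (D * ε ^ ((1:ℝ) / m)) := by
          apply ENNReal.ofReal_le_ofReal
          have hba : b - a ≤ (b - a) / ε₀ ^ ((1:ℝ) / m) * ε ^ ((1:ℝ) / m) := by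
            rw [div_mul_eq_mul_div, le_div_iff₀ hm0]
            exact mul_le_mul_of_nonneg_left hr1 (by linarith)
          have h2 : (b - a) / ε₀ ^ ((1:ℝ) / m) * ε ^ ((1:ℝ) / m) ≤ D * ε ^ ((1:ℝ) / m) :=
            mul_le_mul_of_nonneg_right (le_max_right _ _) (Real.rpow_nonneg hε.le _)
          linarith
end

section
/- Let N ≥ 1 be an integer, A > 0, and let a : ℝ → ℝ^N be a smooth (C^∞) map. Suppose there exist a real α > 0 and a constant C > 0 such that for every (u,σ) ∈ ℝ × ℝ^N with u² + ‖σ‖² = 1 and every ε > 0, meas{ v ∈ [−A,A] : |a(v)·σ − u| ≤ ε } ≤ C·ε^{α}. Then α ≤ 1/N. (Hence the optimal exponent α_opt(N,1) in the one-dimensional-velocity non-degeneracy condition satisfies α_opt(N,1) ≤ 1/N.) -/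
open MeasureTheory Set

private lemma iterZero' : ∀ (n : ℕ), iteratedDeriv n (fun _ : ℝ => (0:ℝ)) = fun _ => 0 := by
  intro n
  induction n with
  | zero => simp [iteratedDeriv_zero]
  | succ n ih =>
    rw [iteratedDeriv_succ']
    simpa using ih

private lemma iterWithinEq' {f : ℝ → ℝ} (hf : ContDiff ℝ (⊤ : ℕ∞) f) {s : Set ℝ} (hs : UniqueDiffOn ℝ s)
    {x : ℝ} (hx : x ∈ s) (n : ℕ) : iteratedDerivWithin n f s x = iteratedDeriv n f x := by
  have h1 := (contDiff_iff_ftaylorSeries.mp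
    (hf.of_le (by simp) : ContDiff ℝ (⊤ : ℕ∞) f)).hasFTaylorSeriesUpToOn s
  have h2 := h1.eq_iteratedFDerivWithin_of_uniqueDiffOn (m := n) (by exact_mod_cast le_top) hs hx
  rw [iteratedDerivWithin_eq_iteratedFDerivWithin, iteratedDeriv_eq_iteratedFDeriv, ← h2]
  rfl

private lemma iterAdd' {f g : ℝ → ℝ} (hf : ContDiff ℝ (⊤ : ℕ∞) f) (hg : ContDiff ℝ (⊤ : ℕ∞) g) (n : ℕ) (x : ℝ) :
    iteratedDeriv n (fun v => f v + g v) x = iteratedDeriv n f x + iteratedDeriv n g x := by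
  simp only [← iteratedDerivWithin_univ]
  exact iteratedDerivWithin_add (mem_univ x) uniqueDiffOn_univ
    ((hf.of_le (by exact_mod_cast le_top)).contDiffWithinAt) ((hg.of_le (by exact_mod_cast le_top)).contDiffWithinAt)

private lemma iterConstMul' {f : ℝ → ℝ} (hf : ContDiff ℝ (⊤ : ℕ∞) f) (c : ℝ) (n : ℕ) (x : ℝ) :
    iteratedDeriv n (fun v => c * f v) x = c * iteratedDeriv n f x := by
  simp only [← iteratedDerivWithin_univ]
  exact iteratedDerivWithin_const_mul (mem_univ x) uniqueDiffOn_univ c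
    ((hf.of_le (by exact_mod_cast le_top)).contDiffWithinAt)

private lemma iterSum' {ι : Type*} (s : Finset ι) (f : ι → ℝ → ℝ) (hf : ∀ i, ContDiff ℝ (⊤ : ℕ∞) (f i))
    (n : ℕ) (x : ℝ) :
    iteratedDeriv n (fun v => ∑ i ∈ s, f i v) x = ∑ i ∈ s, iteratedDeriv n (f i) x := by
  induction s using Finset.cons_induction with
  | empty => simp [iterZero' n]
  | cons a s ha ih =>
    simp only [Finset.sum_cons]
    rw [iterAdd' (hf a) (ContDiff.sum fun i _ => hf i) n x, ih]

private lemma iterConstAdd' {f : ℝ → ℝ} (c : ℝ) {n : ℕ} (hn : 0 < n) (x : ℝ) :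
    iteratedDeriv n (fun v => c + f v) x = iteratedDeriv n f x := by
  simp only [← iteratedDerivWithin_univ]
  exact iteratedDerivWithin_const_add hn c

private lemma taylorBound' (g : ℝ → ℝ) (hg : ContDiff ℝ (⊤ : ℕ∞) g) (N : ℕ) (hN : 1 ≤ N)
    (hder : ∀ k < N, iteratedDeriv k g 0 = 0) (K : ℝ) (A' : ℝ)
    (hK : ∀ y ∈ Icc (0:ℝ) A', |iteratedDeriv N g y| ≤ K) :
    ∀ x ∈ Set.Ioc (0:ℝ) A', |g x| ≤ K * x ^ N := by
  intro x hx
  obtain ⟨hx0, hxA⟩ := hx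
  have hud : UniqueDiffOn ℝ (Icc (0:ℝ) x) := uniqueDiffOn_Icc hx0
  have hf : ContDiffOn ℝ (↑(N-1)) g (Icc (0:ℝ) x) := (hg.of_le (by exact WithTop.coe_le_coe.mpr le_top)).contDiffOn
  have hdiff : Differentiable ℝ (iteratedDeriv (N-1) g) :=
    hg.differentiable_iteratedDeriv (N-1) (by exact WithTop.coe_lt_coe.mpr (ENat.natCast_lt_top (N-1)))
  have hf' : DifferentiableOn ℝ (iteratedDerivWithin (N-1) g (Icc (0:ℝ) x)) (Ioo (0:ℝ) x) := by
    refine (hdiff.differentiableOn).congr fun y hy => ?_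
    exact iterWithinEq' hg hud (Ioo_subset_Icc_self hy) (N-1)
  obtain ⟨x', hx', heq⟩ := taylor_mean_remainder_lagrange (f := g) (n := N-1) hx0.ne
    (by rwa [uIcc_of_le hx0.le]) (by rwa [uIcc_of_le hx0.le, uIoo_of_le hx0.le])
  rw [uIcc_of_le hx0.le] at heq
  rw [uIoo_of_le hx0.le] at hx'
  have htaylor : taylorWithinEval g (N-1) (Icc (0:ℝ) x) 0 x = 0 := by
    rw [taylor_within_apply]
    refine Finset.sum_eq_zero fun k hk => ?_
    rw [iterWithinEq' hg hud (left_mem_Icc.mpr hx0.le) k, hder k ?_, smul_zero]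
    have := Finset.mem_range.mp hk
    omega
  have hNsub : N - 1 + 1 = N := by omega
  rw [htaylor, sub_zero, hNsub] at heq
  have hiw : iteratedDerivWithin N g (Icc (0:ℝ) x) x' =
      iteratedDeriv N g x' := iterWithinEq' hg hud (Ioo_subset_Icc_self hx') N
  rw [heq, hiw]
  have hx'I : x' ∈ Icc (0:ℝ) A' := ⟨hx'.1.le, hx'.2.le.trans hxA⟩
  have hfac : (1:ℝ) ≤ (N.factorial : ℝ) :=
    mod_cast Nat.one_le_iff_ne_zero.mpr (Nat.factorial_ne_zero _)
  have hKnn : 0 ≤ K := le_trans (abs_nonneg _) (hK x' hx'I)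
  rw [sub_zero, abs_div, abs_mul, abs_pow, abs_of_pos hx0,
    abs_of_pos (show (0:ℝ) < (N.factorial : ℝ) by positivity)]
  calc |iteratedDeriv N g x'| * x ^ N / (N.factorial : ℝ)
      ≤ K * x ^ N / 1 :=
        div_le_div₀ (by positivity) (mul_le_mul_of_nonneg_right (hK x' hx'I) (by positivity))
          one_pos hfac
    _ = K * x ^ N := by ring

theorem stmt_11 (N : ℕ) (hN : 1 ≤ N) (A : ℝ) (hA : 0 < A)
    (a : ℝ → Fin N → ℝ) (ha : ContDiff ℝ (⊤ : ℕ∞) a)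
    (α C : ℝ) (hα : 0 < α) (hC : 0 < C)
    (h : ∀ (u : ℝ) (σ : Fin N → ℝ), u ^ 2 + ∑ i, σ i ^ 2 = 1 → ∀ ε : ℝ, 0 < ε →
      volume {v : ℝ | v ∈ Set.Icc (-A) A ∧ |(∑ i, a v i * σ i) - u| ≤ ε} ≤
        ENNReal.ofReal (C * ε ^ α)) :
    α ≤ 1 / N := by
  have hai : ∀ i, ContDiff ℝ (⊤ : ℕ∞) (fun v => a v i) := fun i => contDiff_pi.mp ha i
  set D : ℕ → Fin N → ℝ := fun k i => iteratedDeriv k (fun v => a v i) 0 with hD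
  -- find σ₀ ≠ 0 killing the derivatives of order 1 .. N-1
  obtain ⟨σ₀, hσ₀ne, hker⟩ : ∃ σ₀ : Fin N → ℝ, σ₀ ≠ 0 ∧
      ∀ k : Fin (N-1), ∑ i, D (k.1+1) i * σ₀ i = 0 := by
    set M : Matrix (Fin (N-1)) (Fin N) ℝ := fun k i => D (k.1+1) i with hM
    have hnotinj : ¬ Function.Injective M.mulVecLin := by
      intro hinj
      have := LinearMap.finrank_le_finrank_of_injective hinj
      simp [Module.finrank_fin_fun] at this
      omega
    rw [← LinearMap.ker_eq_bot] at hnotinj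
    obtain ⟨σ₀, hmem, hne⟩ := (Submodule.ne_bot_iff _).mp hnotinj
    refine ⟨σ₀, hne, fun k => ?_⟩
    have := congrFun (LinearMap.mem_ker.mp hmem) k
    rw [Matrix.mulVecLin_apply] at this
    simpa [Matrix.mulVecLin_apply, Matrix.mulVec, dotProduct, hM] using this
  -- normalize
  set T : ℝ := ∑ i, a 0 i * σ₀ i with hT
  have hsumsq : 0 < ∑ i, σ₀ i ^ 2 := by
    obtain ⟨j, hj⟩ := Function.ne_iff.mp hσ₀ne
    refine Finset.sum_pos' (fun i _ => sq_nonneg _) ⟨j, Finset.mem_univ j, ?_⟩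
    have : σ₀ j ≠ 0 := hj
    positivity
  set s : ℝ := Real.sqrt (T ^ 2 + ∑ i, σ₀ i ^ 2) with hs
  have hspos : 0 < s := Real.sqrt_pos.mpr (by positivity)
  set σ : Fin N → ℝ := fun i => σ₀ i / s with hσ
  set u : ℝ := T / s with hu
  have hnorm : u ^ 2 + ∑ i, σ i ^ 2 = 1 := by
    have hs2 : s ^ 2 = T ^ 2 + ∑ i, σ₀ i ^ 2 := Real.sq_sqrt (by positivity)
    simp only [hσ, hu, div_pow]
    rw [← Finset.sum_div, ← add_div, hs2, div_self (by positivity)]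
  set g : ℝ → ℝ := fun v => (∑ i, a v i * σ i) - u with hg
  have hgsm : ContDiff ℝ (⊤ : ℕ∞) g :=
    ContDiff.sub (ContDiff.sum fun i _ => (hai i).mul contDiff_const) contDiff_const
  -- vanishing derivatives
  have hder : ∀ k < N, iteratedDeriv k g 0 = 0 := by
    intro k hk
    rcases Nat.eq_zero_or_pos k with rfl | hkpos
    · rw [iteratedDeriv_zero]
      have : ∑ i, a 0 i * σ i = T / s := by
        simp only [hσ, hT, mul_div_assoc, Finset.sum_div]
      simp [hg, this, hu]
    · have hrw : g = fun v => (-u) + ∑ i, a v i * σ i := by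
        funext v; simp [hg]; ring
      rw [hrw, iterConstAdd' (-u) hkpos 0]
      have h2 : (fun v => ∑ i, a v i * σ i) = fun v => ∑ i, σ i * a v i := by
        funext v; exact Finset.sum_congr rfl fun i _ => mul_comm _ _
      rw [h2, iterSum' Finset.univ (fun i v => σ i * a v i)
        (fun i => (contDiff_const).mul (hai i)) k 0]
      have h3 : ∀ i, iteratedDeriv k (fun v => σ i * a v i) 0 = σ i * D k i := fun i =>
        iterConstMul' (hai i) (σ i) k 0
      simp only [h3]
      have hk1 : k - 1 < N - 1 := by omega
      have h4 := hker ⟨k - 1, hk1⟩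
      have hkk : k - 1 + 1 = k := by omega
      rw [hkk] at h4
      have : ∑ i, σ i * D k i = (∑ i, D k i * σ₀ i) / s := by
        rw [Finset.sum_div]
        exact Finset.sum_congr rfl fun i _ => by simp [hσ]; ring
      rw [this, h4, zero_div]
  -- bound on the N-th derivative
  set A' : ℝ := min A 1 with hA'
  have hA'pos : 0 < A' := lt_min hA one_pos
  have hA'A : A' ≤ A := min_le_left _ _
  obtain ⟨K₀, hK₀⟩ := (isCompact_Icc (a := (0:ℝ)) (b := A')).exists_bound_of_continuousOn
    (hgsm.continuous_iteratedDeriv N (by exact_mod_cast le_top)).continuousOn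
  set K : ℝ := max K₀ 1 with hKdef
  have hKpos : 0 < K := lt_of_lt_of_le one_pos (le_max_right _ _)
  have hK : ∀ y ∈ Icc (0:ℝ) A', |iteratedDeriv N g y| ≤ K := fun y hy =>
    le_trans (hK₀ y hy) (le_max_left _ _)
  have hbound := taylorBound' g hgsm N hN hder K A' hK
  -- main inequality for small ε
  have hNR : (0:ℝ) < (N:ℝ) := by exact_mod_cast hN
  have key : ∀ ε : ℝ, 0 < ε → ε ≤ K * A' ^ N → (ε / K) ^ ((N:ℝ)⁻¹) ≤ C * ε ^ α := by
    intro ε hε hεK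
    set δ : ℝ := (ε / K) ^ ((N:ℝ)⁻¹) with hδdef
    have hεKpos : 0 < ε / K := div_pos hε hKpos
    have hδpos : 0 < δ := Real.rpow_pos_of_pos hεKpos _
    have hδA' : δ ≤ A' := by
      have h1 : ε / K ≤ A' ^ N := (div_le_iff₀' hKpos).mpr hεK
      calc δ ≤ (A' ^ N) ^ ((N:ℝ)⁻¹) :=
            Real.rpow_le_rpow hεKpos.le h1 (by positivity)
        _ = A' := by
            rw [← Real.rpow_natCast A' N, ← Real.rpow_mul hA'pos.le,
              mul_inv_cancel₀ hNR.ne', Real.rpow_one]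
    have hδpow : K * δ ^ N = ε := by
      have : δ ^ N = ε / K := by
        rw [hδdef, ← Real.rpow_natCast ((ε / K) ^ ((N:ℝ)⁻¹)) N, ← Real.rpow_mul hεKpos.le,
          inv_mul_cancel₀ hNR.ne', Real.rpow_one]
      rw [this, mul_div_cancel₀ _ hKpos.ne']
    have hsub : Icc (0:ℝ) δ ⊆
        {v : ℝ | v ∈ Set.Icc (-A) A ∧ |(∑ i, a v i * σ i) - u| ≤ ε} := by
      intro v hv
      obtain ⟨hv0, hvδ⟩ := hv
      refine ⟨⟨le_trans (by linarith) hv0, le_trans (hvδ.trans hδA') hA'A⟩, ?_⟩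
      rcases eq_or_lt_of_le hv0 with rfl | hv0'
      · have : g 0 = 0 := by simpa [iteratedDeriv_zero] using hder 0 (by omega)
        rw [show |(∑ i, a 0 i * σ i) - u| = |g 0| from rfl, this, abs_zero]
        exact hε.le
      · have h1 : |g v| ≤ K * v ^ N := hbound v ⟨hv0', hvδ.trans hδA'⟩
        have h2 : K * v ^ N ≤ K * δ ^ N :=
          mul_le_mul_of_nonneg_left (pow_le_pow_left₀ hv0 hvδ N) hKpos.le
        exact le_trans h1 (h2.trans_eq hδpow)
    have hvol : ENNReal.ofReal δ ≤ ENNReal.ofReal (C * ε ^ α) := by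
      calc ENNReal.ofReal δ = volume (Icc (0:ℝ) δ) := by rw [Real.volume_Icc, sub_zero]
        _ ≤ volume {v : ℝ | v ∈ Set.Icc (-A) A ∧ |(∑ i, a v i * σ i) - u| ≤ ε} :=
            measure_mono hsub
        _ ≤ ENNReal.ofReal (C * ε ^ α) := h u σ hnorm ε hε
    exact (ENNReal.ofReal_le_ofReal_iff (by positivity)).mp hvol
  -- conclude
  by_contra hcon
  push_neg at hcon
  have hβ : 0 < α - (N:ℝ)⁻¹ := by
    rw [one_div] at hcon; linarith
  set β : ℝ := α - (N:ℝ)⁻¹ with hβdef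
  set C' : ℝ := C * K ^ ((N:ℝ)⁻¹) with hC'def
  have hC'pos : 0 < C' := mul_pos hC (Real.rpow_pos_of_pos hKpos _)
  have hone : ∀ ε : ℝ, 0 < ε → ε ≤ K * A' ^ N → 1 ≤ C' * ε ^ β := by
    intro ε hε hεK
    have h1 := key ε hε hεK
    have h2 : (ε / K) ^ ((N:ℝ)⁻¹) = ε ^ ((N:ℝ)⁻¹) / K ^ ((N:ℝ)⁻¹) :=
      Real.div_rpow hε.le hKpos.le _
    have hKr : 0 < K ^ ((N:ℝ)⁻¹) := Real.rpow_pos_of_pos hKpos _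
    have h3 : ε ^ ((N:ℝ)⁻¹) ≤ C' * ε ^ α := by
      rw [h2, div_le_iff₀ hKr] at h1
      calc ε ^ ((N:ℝ)⁻¹) ≤ C * ε ^ α * K ^ ((N:ℝ)⁻¹) := h1
        _ = C' * ε ^ α := by rw [hC'def]; ring
    have hεr : 0 < ε ^ ((N:ℝ)⁻¹) := Real.rpow_pos_of_pos hε _
    calc (1:ℝ) ≤ C' * ε ^ α / ε ^ ((N:ℝ)⁻¹) := (one_le_div hεr).mpr h3
      _ = C' * ε ^ β := by rw [mul_div_assoc, ← Real.rpow_sub hε]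
  set ε : ℝ := min (K * A' ^ N) ((1 / (2 * C')) ^ (β⁻¹)) with hεdef
  have hε1 : 0 < (1 / (2 * C')) ^ (β⁻¹) := Real.rpow_pos_of_pos (by positivity) _
  have hεpos : 0 < ε := lt_min (by positivity) hε1
  have h5 := hone ε hεpos (min_le_left _ _)
  have h6 : ε ^ β ≤ 1 / (2 * C') := by
    calc ε ^ β ≤ ((1 / (2 * C')) ^ (β⁻¹)) ^ β :=
        Real.rpow_le_rpow hεpos.le (min_le_right _ _) hβ.le
      _ = 1 / (2 * C') := by
        rw [← Real.rpow_mul (by positivity), inv_mul_cancel₀ hβ.ne', Real.rpow_one]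
  have h7 : (1:ℝ) ≤ C' * (1 / (2 * C')) := le_trans h5 (mul_le_mul_of_nonneg_left h6 hC'pos.le)
  have h8 : C' * (1 / (2 * C')) = 1 / 2 := by field_simp
  rw [h8] at h7
  linarith
end

section
/- Let k ≥ 1 and d ≥ 1 be integers, A > 0, and let P be a nonempty compact subset of ℝ^d. Let φ : ℝ × ℝ^d → ℝ be such that for each p ∈ P the map v ↦ φ(v,p) is k-times continuously differentiable, and for each 0 ≤ j ≤ k the map (v,p) ↦ ∂_v^j φ(v,p) is continuous on [−A,A] × P. Assume that for every (v,p) ∈ [−A,A] × P one has Σ_{j=1}^{k} |∂_v^j φ(v,p)| > 0. Then there exists a constant C > 0 such that for every ε > 0, sup_{p ∈ P} meas{ v ∈ [−A,A] : |φ(v,p)| ≤ ε } ≤ C·ε^{1/k}. -/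
open Set MeasureTheory

lemma vol_le_of_diam {S : Set ℝ} {r : ℝ}
    (h : ∀ x ∈ S, ∀ y ∈ S, |x - y| ≤ r) :
    volume S ≤ ENNReal.ofReal (2 * r) := by
  rcases S.eq_empty_or_nonempty with rfl | ⟨x₀, hx₀⟩
  · simp
  · have hsub : S ⊆ Set.Icc (x₀ - r) (x₀ + r) := by
      intro y hy
      have := abs_le.mp (h x₀ hx₀ y hy)
      constructor <;> linarith [this.1, this.2]
    calc volume S ≤ volume (Set.Icc (x₀ - r) (x₀ + r)) := measure_mono hsub
      _ = ENNReal.ofReal (2 * r) := by rw [Real.volume_Icc]; ring_nf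

lemma mvt_bound {f : ℝ → ℝ} {n : ℕ} (hf : ContDiff ℝ ((n + 1 : ℕ) : ℕ∞) f)
    {x y lam : ℝ} (hxy : x < y)
    (h : ∀ t ∈ Set.Icc x y, lam ≤ |iteratedDeriv (n + 1) f t|) :
    lam * (y - x) ≤ |iteratedDeriv n f y - iteratedDeriv n f x| := by
  have hdiff : Differentiable ℝ (iteratedDeriv n f) :=
    hf.differentiable_iteratedDeriv n (by exact_mod_cast Nat.lt_succ_self n)
  obtain ⟨c, hc, hderiv⟩ := exists_deriv_eq_slope (iteratedDeriv n f) hxy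
    hdiff.continuous.continuousOn hdiff.differentiableOn
  have h1 : lam ≤ |deriv (iteratedDeriv n f) c| := by
    rw [← iteratedDeriv_succ]; exact h c ⟨hc.1.le, hc.2.le⟩
  rw [hderiv, abs_div, abs_of_pos (by linarith : (0:ℝ) < y - x)] at h1
  calc lam * (y - x) ≤ |iteratedDeriv n f y - iteratedDeriv n f x| / (y - x) * (y - x) := by
        apply mul_le_mul_of_nonneg_right h1 (by linarith)
    _ = |iteratedDeriv n f y - iteratedDeriv n f x| := by
        rw [div_mul_cancel₀]; exact ne_of_gt (by linarith)

lemma sublevel (k : ℕ) (hk : 1 ≤ k) :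
    ∀ (f : ℝ → ℝ), ContDiff ℝ (k : ℕ∞) f → ∀ (a b lam eps : ℝ), 0 < lam → 0 < eps →
    (∀ x ∈ Set.Ioo a b, lam ≤ |iteratedDeriv k f x|) →
    volume {x | x ∈ Set.Ioo a b ∧ |f x| ≤ eps} ≤
      ENNReal.ofReal ((4:ℝ) ^ k * (eps / lam) ^ ((1:ℝ) / k)) := by
  induction k, hk using Nat.le_induction with
  | base =>
    intro f hf a b lam eps hlam heps h
    have hdiam : ∀ x ∈ {x | x ∈ Set.Ioo a b ∧ |f x| ≤ eps},
        ∀ y ∈ {x | x ∈ Set.Ioo a b ∧ |f x| ≤ eps}, |x - y| ≤ 2 * eps / lam := by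
      have key : ∀ x y : ℝ, x ∈ {x | x ∈ Set.Ioo a b ∧ |f x| ≤ eps} →
          y ∈ {x | x ∈ Set.Ioo a b ∧ |f x| ≤ eps} → x < y → y - x ≤ 2 * eps / lam := by
        intro x y hx hy hxy
        have hmvt : lam * (y - x) ≤ |iteratedDeriv 0 f y - iteratedDeriv 0 f x| := by
          apply mvt_bound (n := 0) (by exact_mod_cast hf) hxy
          intro t ht
          exact h t ⟨lt_of_lt_of_le hx.1.1 ht.1, lt_of_le_of_lt ht.2 hy.1.2⟩
        rw [iteratedDeriv_zero] at hmvt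
        have : |f y - f x| ≤ 2 * eps := by
          calc |f y - f x| ≤ |f y| + |f x| := abs_sub _ _
            _ ≤ 2 * eps := by linarith [hx.2, hy.2]
        rw [le_div_iff₀ hlam, mul_comm]
        linarith
      intro x hx y hy
      rcases lt_trichotomy x y with hlt | heq | hgt
      · rw [abs_of_nonpos (by linarith)]; linarith [key x y hx hy hlt]
      · simp [heq, div_nonneg (by linarith : (0:ℝ) ≤ 2 * eps) hlam.le]
      · rw [abs_of_nonneg (by linarith)]; linarith [key y x hy hx hgt]
    calc volume {x | x ∈ Set.Ioo a b ∧ |f x| ≤ eps}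
        ≤ ENNReal.ofReal (2 * (2 * eps / lam)) := vol_le_of_diam hdiam
      _ ≤ ENNReal.ofReal ((4:ℝ) ^ 1 * (eps / lam) ^ ((1:ℝ) / (1:ℕ))) := by
          apply ENNReal.ofReal_le_ofReal
          rw [Nat.cast_one, div_one, Real.rpow_one]
          rw [pow_one]
          rw [mul_div_assoc]
          linarith
  | succ n hn ih =>
    intro f hf a b lam eps hlam heps h
    have hn1 : (1:ℝ) ≤ n := by exact_mod_cast hn
    set x₀eps := eps / lam with hxe
    have hxepos : 0 < eps / lam := div_pos heps hlam
    set t := (eps / lam) ^ ((1:ℝ) / (n + 1 : ℕ)) with ht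
    have htpos : 0 < t := Real.rpow_pos_of_pos hxepos _
    set δ := lam * t with hδ
    have hδpos : 0 < δ := mul_pos hlam htpos
    -- key exponent computation : (eps / δ) ^ (1/n) = t
    have hkey : (eps / δ) ^ ((1:ℝ) / n) = t := by
      have h1 : eps / δ = (eps / lam) ^ (1 - (1:ℝ) / (n + 1 : ℕ)) := by
        rw [Real.rpow_sub hxepos, Real.rpow_one, hδ, ht]
        field_simp
      rw [h1, ← Real.rpow_mul hxepos.le, ht]
      congr 1
      have hnne : (n:ℝ) ≠ 0 := by positivity
      have hn1ne : ((n:ℝ) + 1) ≠ 0 := by positivity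
      push_cast
      field_simp
      ring
    have h4n : (4:ℝ) ≤ 4 ^ n := by
      calc (4:ℝ) = 4 ^ 1 := (pow_one 4).symm
        _ ≤ 4 ^ n := pow_le_pow_right₀ (by norm_num) hn
    have hfn : ContDiff ℝ (n : ℕ∞) f := hf.of_le (by exact_mod_cast Nat.le_succ n)
    by_cases hJ : ∃ x₀ ∈ Set.Ioo a b, |iteratedDeriv n f x₀| < δ
    · obtain ⟨x₀, hx₀ab, hx₀δ⟩ := hJ
      -- points at distance ≥ 2t from x₀ have |f^(n)| ≥ δ
      have hfar : ∀ x ∈ Set.Ioo a b, 2 * t ≤ |x - x₀| → δ ≤ |iteratedDeriv n f x| := by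
        intro x hx hdist
        have key : ∀ u v : ℝ, u ∈ Set.Ioo a b → v ∈ Set.Ioo a b → u < v → 2 * t ≤ v - u →
            δ ≤ |iteratedDeriv n f v - iteratedDeriv n f u| := by
          intro u v hu hv huv hd
          have := mvt_bound (n := n) hf huv (fun s hs =>
            h s ⟨lt_of_lt_of_le hu.1 hs.1, lt_of_le_of_lt hs.2 hv.2⟩)
          calc δ = lam * t := hδ
            _ ≤ lam * ((v - u) / 2) := by
                apply mul_le_mul_of_nonneg_left _ hlam.le
                linarith
            _ ≤ |iteratedDeriv n f v - iteratedDeriv n f u| := by nlinarith [this]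
        rcases lt_or_gt_of_ne (show x ≠ x₀ by
            intro hxx; rw [hxx] at hdist; simp at hdist; linarith) with hlt | hgt
        · have h3 : 2 * δ ≤ |iteratedDeriv n f x₀ - iteratedDeriv n f x| := by
            have := mvt_bound (n := n) hf hlt (fun s hs =>
              h s ⟨lt_of_lt_of_le hx.1 hs.1, lt_of_le_of_lt hs.2 hx₀ab.2⟩)
            have hd' : 2 * t ≤ x₀ - x := by rw [abs_of_nonpos (by linarith)] at hdist; linarith
            calc 2 * δ = lam * (2 * t) := by rw [hδ]; ring
              _ ≤ lam * (x₀ - x) := mul_le_mul_of_nonneg_left hd' hlam.le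
              _ ≤ _ := this
          have h4 : |iteratedDeriv n f x₀ - iteratedDeriv n f x| ≤
              |iteratedDeriv n f x₀| + |iteratedDeriv n f x| := abs_sub _ _
          linarith
        · have h3 : 2 * δ ≤ |iteratedDeriv n f x - iteratedDeriv n f x₀| := by
            have := mvt_bound (n := n) hf hgt (fun s hs =>
              h s ⟨lt_of_lt_of_le hx₀ab.1 hs.1, lt_of_le_of_lt hs.2 hx.2⟩)
            have hd' : 2 * t ≤ x - x₀ := by rw [abs_of_nonneg (by linarith)] at hdist; linarith
            calc 2 * δ = lam * (2 * t) := by rw [hδ]; ring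
              _ ≤ lam * (x - x₀) := mul_le_mul_of_nonneg_left hd' hlam.le
              _ ≤ _ := this
          have h4 : |iteratedDeriv n f x - iteratedDeriv n f x₀| ≤
              |iteratedDeriv n f x| + |iteratedDeriv n f x₀| := abs_sub _ _
          linarith
      -- split the set
      have hsplit : {x | x ∈ Set.Ioo a b ∧ |f x| ≤ eps} ⊆
          {x | x ∈ Set.Ioo a (x₀ - 2 * t) ∧ |f x| ≤ eps} ∪ Set.Icc (x₀ - 2 * t) (x₀ + 2 * t)
            ∪ {x | x ∈ Set.Ioo (x₀ + 2 * t) b ∧ |f x| ≤ eps} := by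
        intro x hx
        rcases lt_trichotomy x (x₀ - 2 * t) with h1 | h1 | h1
        · exact Or.inl (Or.inl ⟨⟨hx.1.1, h1⟩, hx.2⟩)
        · exact Or.inl (Or.inr ⟨le_of_eq h1.symm, by nlinarith [hx.1.2, hx₀ab.2]⟩)
        · rcases le_or_gt x (x₀ + 2 * t) with h2 | h2
          · exact Or.inl (Or.inr ⟨h1.le, h2⟩)
          · exact Or.inr ⟨⟨h2, hx.1.2⟩, hx.2⟩
      have hbd1 : volume {x | x ∈ Set.Ioo a (x₀ - 2 * t) ∧ |f x| ≤ eps} ≤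
          ENNReal.ofReal ((4:ℝ) ^ n * t) := by
        have := ih f hfn a (x₀ - 2 * t) δ eps hδpos heps (fun x hx => by
          apply hfar x ⟨hx.1, by linarith [hx.2, hx₀ab.2, htpos]⟩
          rw [abs_of_nonpos (by linarith [hx.2])]
          linarith [hx.2])
        rwa [hkey] at this
      have hbd2 : volume {x | x ∈ Set.Ioo (x₀ + 2 * t) b ∧ |f x| ≤ eps} ≤
          ENNReal.ofReal ((4:ℝ) ^ n * t) := by
        have := ih f hfn (x₀ + 2 * t) b δ eps hδpos heps (fun x hx => by
          apply hfar x ⟨by linarith [hx.1, hx₀ab.1, htpos], hx.2⟩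
          rw [abs_of_nonneg (by linarith [hx.1])]
          linarith [hx.1])
        rwa [hkey] at this
      have hbdM : volume (Set.Icc (x₀ - 2 * t) (x₀ + 2 * t)) = ENNReal.ofReal (4 * t) := by
        rw [Real.volume_Icc]; ring_nf
      calc volume {x | x ∈ Set.Ioo a b ∧ |f x| ≤ eps}
          ≤ volume ({x | x ∈ Set.Ioo a (x₀ - 2 * t) ∧ |f x| ≤ eps} ∪
              Set.Icc (x₀ - 2 * t) (x₀ + 2 * t) ∪
              {x | x ∈ Set.Ioo (x₀ + 2 * t) b ∧ |f x| ≤ eps}) := measure_mono hsplit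
        _ ≤ volume ({x | x ∈ Set.Ioo a (x₀ - 2 * t) ∧ |f x| ≤ eps} ∪
              Set.Icc (x₀ - 2 * t) (x₀ + 2 * t)) +
            volume {x | x ∈ Set.Ioo (x₀ + 2 * t) b ∧ |f x| ≤ eps} := measure_union_le _ _
        _ ≤ (volume {x | x ∈ Set.Ioo a (x₀ - 2 * t) ∧ |f x| ≤ eps} +
              volume (Set.Icc (x₀ - 2 * t) (x₀ + 2 * t))) +
            volume {x | x ∈ Set.Ioo (x₀ + 2 * t) b ∧ |f x| ≤ eps} :=
            add_le_add (measure_union_le _ _) le_rfl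
        _ ≤ (ENNReal.ofReal ((4:ℝ) ^ n * t) + ENNReal.ofReal (4 * t)) +
            ENNReal.ofReal ((4:ℝ) ^ n * t) :=
            add_le_add (add_le_add hbd1 (le_of_eq hbdM)) hbd2
        _ ≤ ENNReal.ofReal ((4:ℝ) ^ (n + 1) * (eps / lam) ^ ((1:ℝ) / (n + 1 : ℕ))) := by
            rw [← ENNReal.ofReal_add (by positivity) (by positivity),
              ← ENNReal.ofReal_add (by positivity) (by positivity)]
            apply ENNReal.ofReal_le_ofReal
            have hh : (4:ℝ) ^ n * t + 4 * t + 4 ^ n * t ≤ 4 ^ (n + 1) * t := by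
              rw [pow_succ]
              nlinarith [mul_nonneg (by nlinarith [h4n] : (0:ℝ) ≤ 2 * 4 ^ n - 4) htpos.le]
            calc (4:ℝ) ^ n * t + 4 * t + 4 ^ n * t ≤ 4 ^ (n + 1) * t := hh
              _ ≤ _ := by rw [ht]
    · push_neg at hJ
      have := ih f hfn a b δ eps hδpos heps (fun x hx => hJ x hx)
      rw [hkey] at this
      refine this.trans (ENNReal.ofReal_le_ofReal ?_)
      have h1 : (4:ℝ) ^ n * t ≤ 4 ^ (n + 1) * t := by
        apply mul_le_mul_of_nonneg_right _ htpos.le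
        exact pow_le_pow_right₀ (by norm_num) (Nat.le_succ n)
      calc (4:ℝ) ^ n * t ≤ 4 ^ (n + 1) * t := h1
        _ ≤ _ := by rw [ht]

set_option maxHeartbeats 1000000 in
theorem stmt_13 (k d : ℕ) (hk : 1 ≤ k) (hd : 1 ≤ d) (A : ℝ) (hA : 0 < A)
    (P : Set (Fin d → ℝ)) (hP : IsCompact P) (hPne : P.Nonempty)
    (φ : ℝ → (Fin d → ℝ) → ℝ)
    (hreg : ∀ p ∈ P, ContDiff ℝ (k : ℕ) (fun v => φ v p))
    (hcont : ∀ j ≤ k, ContinuousOn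
      (fun x : ℝ × (Fin d → ℝ) => iteratedDeriv j (fun v => φ v x.2) x.1)
      (Set.Icc (-A) A ×ˢ P))
    (hnd : ∀ v ∈ Set.Icc (-A) A, ∀ p ∈ P,
      0 < ∑ j ∈ Finset.Icc 1 k, |iteratedDeriv j (fun w => φ w p) v|) :
    ∃ C : ℝ, 0 < C ∧ ∀ ε : ℝ, 0 < ε → ∀ p ∈ P,
      volume {v : ℝ | v ∈ Set.Icc (-A) A ∧ |φ v p| ≤ ε} ≤
        ENNReal.ofReal (C * ε ^ ((1 : ℝ) / k)) := by
  classical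
  have hkR : (0:ℝ) < k := by exact_mod_cast hk
  set F : ℕ → ℝ × (Fin d → ℝ) → ℝ :=
    fun j x => iteratedDeriv j (fun v => φ v x.2) x.1 with hF
  set K : Set (ℝ × (Fin d → ℝ)) := Set.Icc (-A) A ×ˢ P with hKdef
  have hKc : IsCompact K := isCompact_Icc.prod hP
  obtain ⟨p₀, hp₀⟩ := hPne
  have hKne : K.Nonempty := ⟨(0, p₀), ⟨⟨show -A ≤ (0:ℝ) by linarith, show (0:ℝ) ≤ A by linarith⟩, hp₀⟩⟩
  have hG : ContinuousOn (fun x => ∑ j ∈ Finset.Icc 1 k, |F j x|) K := by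
    apply continuousOn_finset_sum
    intro j hj
    exact (hcont j (Finset.mem_Icc.mp hj).2).abs
  obtain ⟨x₀, hx₀K, hx₀min⟩ := hKc.exists_isMinOn hKne hG
  set c := ∑ j ∈ Finset.Icc 1 k, |F j x₀| with hcdef
  have hcpos : 0 < c := hnd x₀.1 hx₀K.1 x₀.2 hx₀K.2
  set c' := c / (2 * k) with hc'def
  have hc'pos : 0 < c' := by positivity
  have key : ∀ x : K, ∃ jrW : ℕ × ℝ × Set (Fin d → ℝ),
      1 ≤ jrW.1 ∧ jrW.1 ≤ k ∧ 0 < jrW.2.1 ∧ IsOpen jrW.2.2 ∧ (x : ℝ × (Fin d → ℝ)).2 ∈ jrW.2.2 ∧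
      ∀ y ∈ (Set.Ioo ((x : ℝ × (Fin d → ℝ)).1 - jrW.2.1) ((x : ℝ × (Fin d → ℝ)).1 + jrW.2.1)
          ×ˢ jrW.2.2) ∩ K, c' ≤ |F jrW.1 y| := by
    rintro ⟨x, hxK⟩
    have hsum : c ≤ ∑ j ∈ Finset.Icc 1 k, |F j x| := hx₀min hxK
    have hsum2 : ∑ _j ∈ Finset.Icc 1 k, (c / k) ≤ ∑ j ∈ Finset.Icc 1 k, |F j x| := by
      rw [Finset.sum_const, Nat.card_Icc, Nat.add_sub_cancel, nsmul_eq_mul,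
        mul_div_cancel₀ _ (ne_of_gt hkR)]
      exact hsum
    obtain ⟨j, hjmem, hjge⟩ := Finset.exists_le_of_sum_le
      ⟨1, Finset.mem_Icc.mpr ⟨le_refl 1, hk⟩⟩ hsum2
    obtain ⟨hj1, hj2⟩ := Finset.mem_Icc.mp hjmem
    have hcklt : c' < |F j x| := by
      refine lt_of_lt_of_le ?_ hjge
      rw [hc'def]
      rw [div_lt_div_iff₀ (by positivity) hkR]
      nlinarith [hcpos]
    have hev : {y | c' < |F j y|} ∈ nhdsWithin x K := by
      have hcw : ContinuousWithinAt (fun y => |F j y|) K x := ((hcont j hj2).abs) x hxK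
      exact hcw (Ioi_mem_nhds hcklt)
    obtain ⟨u, huopen, hxu, husub⟩ := mem_nhdsWithin.mp hev
    obtain ⟨u1, u2, hu1, hu2, hx1, hx2, hprod⟩ := isOpen_prod_iff.mp huopen x.1 x.2 hxu
    obtain ⟨r, hrpos, hball⟩ := Metric.isOpen_iff.mp hu1 x.1 hx1
    rw [Real.ball_eq_Ioo] at hball
    refine ⟨(j, r, u2), hj1, hj2, hrpos, hu2, hx2, ?_⟩
    rintro ⟨v, q⟩ ⟨⟨hv, hq⟩, hyK⟩
    have : (v, q) ∈ u ∩ K := ⟨hprod ⟨hball hv, hq⟩, hyK⟩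
    exact (husub this).le
  choose jrW hj1 hj2 hrpos hWopen hmemW hbound using key
  set U : K → Set (ℝ × (Fin d → ℝ)) := fun x =>
    Set.Ioo ((x : ℝ × (Fin d → ℝ)).1 - (jrW x).2.1) ((x : ℝ × (Fin d → ℝ)).1 + (jrW x).2.1)
      ×ˢ (jrW x).2.2 with hU
  have hUopen : ∀ x : K, IsOpen (U x) := fun x => isOpen_Ioo.prod (hWopen x)
  have hcover : K ⊆ ⋃ x : K, U x := by
    intro y hy
    have hr := hrpos ⟨y, hy⟩
    exact Set.mem_iUnion.mpr ⟨⟨y, hy⟩, ⟨⟨by linarith, by linarith⟩, hmemW ⟨y, hy⟩⟩⟩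
  obtain ⟨s, hs⟩ := hKc.elim_finite_subcover U hUopen hcover
  have hc'k : 0 < c' ^ ((1:ℝ)/k) := Real.rpow_pos_of_pos hc'pos _
  set D : ℝ := (4:ℝ) ^ k / c' ^ ((1:ℝ)/k) with hD
  have hDpos : 0 < D := by positivity
  have hC2 : (0:ℝ) < 2 * A / c' ^ ((1:ℝ)/k) := by positivity
  have hC1 : (0:ℝ) ≤ s.card * D := mul_nonneg (Nat.cast_nonneg _) hDpos.le
  refine ⟨s.card * D + 2 * A / c' ^ ((1:ℝ)/k) + 1, by linarith, ?_⟩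
  intro ε hε p hp
  have hεk : 0 < ε ^ ((1:ℝ)/k) := Real.rpow_pos_of_pos hε _
  by_cases hcase : ε ≤ c'
  · -- small ε
    set s' := s.filter (fun x => p ∈ (jrW x).2.2) with hs'
    set SS : K → Set ℝ := fun x =>
      {v | v ∈ Set.Ioo (max ((x : ℝ × (Fin d → ℝ)).1 - (jrW x).2.1) (-A))
          (min ((x : ℝ × (Fin d → ℝ)).1 + (jrW x).2.1) A) ∧ |φ v p| ≤ ε} with hSS
    have hcov : {v : ℝ | v ∈ Set.Icc (-A) A ∧ |φ v p| ≤ ε} ⊆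
        ({-A, A} : Set ℝ) ∪ ⋃ x ∈ s', SS x := by
      rintro v ⟨hvI, hvε⟩
      rcases eq_or_lt_of_le hvI.1 with h1 | h1
      · exact Or.inl (Or.inl h1.symm)
      rcases eq_or_lt_of_le hvI.2 with h2 | h2
      · exact Or.inl (Or.inr h2)
      have hvK : (v, p) ∈ K := ⟨hvI, hp⟩
      obtain ⟨x, hxmem⟩ := Set.mem_iUnion.mp (hs hvK)
      obtain ⟨xs, hxs⟩ := Set.mem_iUnion.mp hxmem
      obtain ⟨⟨hv1, hv2⟩, hpW⟩ := hxs
      refine Or.inr (Set.mem_biUnion (Finset.mem_filter.mpr ⟨xs, hpW⟩) ?_)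
      exact ⟨⟨max_lt hv1 h1, lt_min hv2 h2⟩, hvε⟩
    have hSSx : ∀ x ∈ s', volume (SS x) ≤ ENNReal.ofReal (D * ε ^ ((1:ℝ)/k)) := by
      intro x hx
      obtain ⟨hxs, hpW⟩ := Finset.mem_filter.mp hx
      have hjx1 : 1 ≤ (jrW x).1 := hj1 x
      have hcd : ContDiff ℝ ((jrW x).1 : ℕ∞) (fun v => φ v p) :=
        (hreg p hp).of_le (by exact_mod_cast hj2 x)
      have hhyp : ∀ v ∈ Set.Ioo (max ((x : ℝ × (Fin d → ℝ)).1 - (jrW x).2.1) (-A))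
          (min ((x : ℝ × (Fin d → ℝ)).1 + (jrW x).2.1) A),
          c' ≤ |iteratedDeriv (jrW x).1 (fun w => φ w p) v| := by
        intro v hv
        have h1 : (x : ℝ × (Fin d → ℝ)).1 - (jrW x).2.1 < v :=
          lt_of_le_of_lt (le_max_left _ _) hv.1
        have h2 : -A < v := lt_of_le_of_lt (le_max_right _ _) hv.1
        have h3 : v < (x : ℝ × (Fin d → ℝ)).1 + (jrW x).2.1 :=
          lt_of_lt_of_le hv.2 (min_le_left _ _)
        have h4 : v < A := lt_of_lt_of_le hv.2 (min_le_right _ _)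
        exact hbound x (v, p) ⟨⟨⟨h1, h3⟩, hpW⟩, ⟨⟨h2.le, h4.le⟩, hp⟩⟩
      have hsl := sublevel (jrW x).1 hjx1 (fun v => φ v p) hcd _ _ c' ε hc'pos hε hhyp
      refine hsl.trans (ENNReal.ofReal_le_ofReal ?_)
      have hd1 : ε / c' ≤ 1 := (div_le_one hc'pos).mpr hcase
      have hd0 : 0 < ε / c' := div_pos hε hc'pos
      have hjxk : ((jrW x).1 : ℝ) ≤ k := by exact_mod_cast hj2 x
      have hjxR : (0:ℝ) < (jrW x).1 := by exact_mod_cast hjx1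
      have h2 : (ε/c') ^ ((1:ℝ)/(jrW x).1) ≤ (ε/c') ^ ((1:ℝ)/k) :=
        Real.rpow_le_rpow_of_exponent_ge hd0 hd1 (one_div_le_one_div_of_le hjxR hjxk)
      have h3 : (4:ℝ) ^ (jrW x).1 ≤ 4 ^ k := pow_le_pow_right₀ (by norm_num) (hj2 x)
      have h4 : (ε/c') ^ ((1:ℝ)/k) = ε ^ ((1:ℝ)/k) / c' ^ ((1:ℝ)/k) :=
        Real.div_rpow hε.le hc'pos.le _
      calc (4:ℝ) ^ (jrW x).1 * (ε/c') ^ ((1:ℝ)/(jrW x).1)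
          ≤ 4 ^ k * (ε/c') ^ ((1:ℝ)/k) :=
            mul_le_mul h3 h2 (Real.rpow_nonneg hd0.le _) (by positivity)
        _ = D * ε ^ ((1:ℝ)/k) := by rw [h4, hD]; ring
    have hz : volume ({-A, A} : Set ℝ) = 0 :=
      ((Set.finite_singleton (A:ℝ)).insert (-A)).countable.measure_zero _
    calc volume {v : ℝ | v ∈ Set.Icc (-A) A ∧ |φ v p| ≤ ε}
        ≤ volume (({-A, A} : Set ℝ) ∪ ⋃ x ∈ s', SS x) := measure_mono hcov
      _ ≤ volume ({-A, A} : Set ℝ) + volume (⋃ x ∈ s', SS x) := measure_union_le _ _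
      _ = volume (⋃ x ∈ s', SS x) := by rw [hz, zero_add]
      _ ≤ ∑ x ∈ s', volume (SS x) := measure_biUnion_finset_le _ _
      _ ≤ ∑ _x ∈ s', ENNReal.ofReal (D * ε ^ ((1:ℝ)/k)) := Finset.sum_le_sum hSSx
      _ = (s'.card : ENNReal) * ENNReal.ofReal (D * ε ^ ((1:ℝ)/k)) := by
          rw [Finset.sum_const, nsmul_eq_mul]
      _ ≤ (s.card : ENNReal) * ENNReal.ofReal (D * ε ^ ((1:ℝ)/k)) := by
          apply mul_le_mul_left
          exact_mod_cast Nat.cast_le.mpr (Finset.card_filter_le _ _)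
      _ ≤ ENNReal.ofReal ((s.card * D + 2 * A / c' ^ ((1:ℝ)/k) + 1) * ε ^ ((1:ℝ)/k)) := by
          rw [← ENNReal.ofReal_natCast s.card,
            ← ENNReal.ofReal_mul (Nat.cast_nonneg s.card)]
          apply ENNReal.ofReal_le_ofReal
          rw [← mul_assoc]
          apply mul_le_mul_of_nonneg_right _ hεk.le
          linarith
  · push_neg at hcase
    have hvol : volume {v : ℝ | v ∈ Set.Icc (-A) A ∧ |φ v p| ≤ ε} ≤ ENNReal.ofReal (2 * A) := by
      refine (measure_mono (fun v hv => hv.1)).trans ?_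
      rw [Real.volume_Icc]
      apply ENNReal.ofReal_le_ofReal
      linarith
    refine hvol.trans (ENNReal.ofReal_le_ofReal ?_)
    have h1 : c' ^ ((1:ℝ)/k) ≤ ε ^ ((1:ℝ)/k) :=
      Real.rpow_le_rpow hc'pos.le hcase.le (by positivity)
    have h3 : 2 * A ≤ (2 * A / c' ^ ((1:ℝ)/k)) * ε ^ ((1:ℝ)/k) := by
      rw [div_mul_eq_mul_div, le_div_iff₀ hc'k]
      exact mul_le_mul_of_nonneg_left h1 (by linarith)
    refine h3.trans ?_
    apply mul_le_mul_of_nonneg_right _ hεk.le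
    linarith
end

section
/- Let N ≥ 1 be an integer, A > 0, and define a : ℝ → ℝ^N by a(v) = (v, v², …, v^N). Then there exists a constant C > 0 such that for every (u,σ) ∈ ℝ × ℝ^N with u² + ‖σ‖² = 1 and every ε > 0, meas{ v ∈ [−A,A] : |Σ_{i=1}^{N} σ_i v^i − u| ≤ ε } ≤ C·ε^{1/N}. (Hence the field a(v) = (v, v², …, v^N) satisfies the non-degeneracy measure condition with exponent α = 1/N.) -/
open MeasureTheory Polynomial Finset

lemma exists_separated (n : ℕ) (A : ℝ) (hA : 0 < A) (S : Set ℝ) (hSm : MeasurableSet S)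
    (hSsub : S ⊆ Set.Icc (-A) A) (hmpos : 0 < (volume S).toReal) :
    ∃ y : Fin (n+1) → ℝ, (∀ j, y j ∈ S) ∧
      ∀ j k : Fin (n+1), j < k →
        (volume S).toReal / (2*n+2) ≤ y k - y j := by
  set m : ℝ := (volume S).toReal with hm
  set δ : ℝ := m / (2*n+2) with hδdef
  have hδpos : 0 < δ := by positivity
  have hfin : ∀ T : Set ℝ, T ⊆ S → volume T ≠ ⊤ := by
    intro T hT
    have : volume T ≤ volume (Set.Icc (-A) A) := measure_mono (hT.trans hSsub)
    exact ne_top_of_le_ne_top (by simp [Real.volume_Icc]) this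
  set F : ℝ → ℝ := fun t => (volume (S ∩ Set.Iic t)).toReal with hF
  have hmono : Monotone F := by
    intro a b hab
    exact ENNReal.toReal_mono (hfin _ Set.inter_subset_left)
      (measure_mono (Set.inter_subset_inter_right _ (Set.Iic_subset_Iic.mpr hab)))
  have hsplit : ∀ a b : ℝ, a ≤ b →
      F b = F a + (volume (S ∩ Set.Ioc a b)).toReal := by
    intro a b hab
    have hdisj : Disjoint (S ∩ Set.Iic a) (S ∩ Set.Ioc a b) :=
      (Set.Iic_disjoint_Ioc le_rfl).mono Set.inter_subset_right Set.inter_subset_right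
    have hunion : S ∩ Set.Iic b = (S ∩ Set.Iic a) ∪ (S ∩ Set.Ioc a b) := by
      rw [← Set.inter_union_distrib_left, Set.Iic_union_Ioc_eq_Iic hab]
    rw [hF]
    simp only
    rw [hunion, measure_union hdisj (hSm.inter measurableSet_Ioc),
      ENNReal.toReal_add (hfin _ Set.inter_subset_left) (hfin _ Set.inter_subset_left)]
  have hlip : ∀ a b : ℝ, a ≤ b → F b - F a ≤ b - a := by
    intro a b hab
    rw [hsplit a b hab]
    have h1 : volume (S ∩ Set.Ioc a b) ≤ ENNReal.ofReal (b - a) := by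
      calc volume (S ∩ Set.Ioc a b) ≤ volume (Set.Ioc a b) := measure_mono Set.inter_subset_right
        _ = ENNReal.ofReal (b - a) := by rw [Real.volume_Ioc]
    have := ENNReal.toReal_mono (by simp) h1
    rw [ENNReal.toReal_ofReal (by linarith)] at this
    linarith
  have hcont : Continuous F := by
    rw [Metric.continuous_iff]
    intro b εc hεc
    refine ⟨εc, hεc, fun a hab => ?_⟩
    rw [Real.dist_eq] at *
    rcases le_total a b with h | h
    · have h1 := hlip a b h
      have h2 := hmono h
      rw [abs_sub_comm, abs_of_nonneg (by linarith)]
      calc F b - F a ≤ b - a := h1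
        _ ≤ |a - b| := by rw [abs_sub_comm]; exact le_abs_self _ |>.trans' (by linarith [le_abs_self (b-a)])
        _ < εc := hab
    · have h1 := hlip b a h
      have h2 := hmono h
      rw [abs_of_nonneg (by linarith)]
      calc F a - F b ≤ a - b := h1
        _ ≤ |a - b| := le_abs_self _
        _ < εc := hab
  have hFbot : F (-A-1) = 0 := by
    rw [hF]
    simp only
    have : S ∩ Set.Iic (-A-1) = ∅ := by
      ext s
      simp only [Set.mem_inter_iff, Set.mem_Iic, Set.mem_empty_iff_false, iff_false, not_and]
      intro hs
      have := (hSsub hs).1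
      intro h
      linarith
    rw [this]; simp
  have hFtop : F A = m := by
    have hSA : S ∩ Set.Iic A = S := by
      ext s
      simp only [Set.mem_inter_iff, Set.mem_Iic, and_iff_left_iff_imp]
      exact fun hs => (hSsub hs).2
    rw [hF]
    simp only
    rw [hSA, hm]
  -- quantile points
  set T : ℕ → Set ℝ := fun k => Set.Icc (-A-1) A ∩ F ⁻¹' Set.Ici (k * δ) with hT
  have hTclosed : ∀ k, IsClosed (T k) := fun k =>
    isClosed_Icc.inter (isClosed_Ici.preimage hcont)
  have hTne : ∀ k : ℕ, (k : ℝ) * δ ≤ m → (T k).Nonempty := by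
    intro k hk
    refine ⟨A, ⟨by linarith, le_rfl⟩, ?_⟩
    rw [Set.mem_preimage, Set.mem_Ici, hFtop]
    exact hk
  have hTbdd : ∀ k, BddBelow (T k) := fun k =>
    ⟨-A-1, fun t ht => ht.1.1⟩
  set x : ℕ → ℝ := fun k => if k = 0 then -A-1 else sInf (T k) with hx
  have hxmem : ∀ k : ℕ, k ≠ 0 → (k:ℝ) * δ ≤ m → x k ∈ T k := by
    intro k hk hkm
    rw [hx]; simp only [hk, if_false]
    exact (hTclosed k).csInf_mem (hTne k hkm) (hTbdd k)
  have hxF : ∀ k : ℕ, (k:ℝ) * δ ≤ m → F (x k) = k * δ := by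
    intro k hkm
    rcases Nat.eq_zero_or_pos k with h0 | hpos
    · subst h0; simp only [hx, if_true, Nat.cast_zero, zero_mul]; simpa using hFbot
    have hk0 : k ≠ 0 := Nat.pos_iff_ne_zero.mp hpos
    have hmem := hxmem k hk0 hkm
    have hge : (k:ℝ) * δ ≤ F (x k) := hmem.2
    have hle : F (x k) ≤ (k:ℝ) * δ := by
      by_contra hgt
      push_neg at hgt
      have hxgt : -A-1 < x k := by
        by_contra hle'
        push_neg at hle'
        have : F (x k) ≤ F (-A-1) := hmono hle'
        rw [hFbot] at this
        have : (0:ℝ) < (k:ℝ) * δ := by positivity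
        linarith
      obtain ⟨η, hη, hball⟩ := Metric.continuous_iff.mp hcont (x k) (F (x k) - k * δ) (by linarith)
      set t : ℝ := x k - min (η/2) ((x k - (-A-1))/2) with ht
      have hmin1 : 0 < min (η/2) ((x k - (-A-1))/2) := lt_min (by linarith) (by linarith)
      have htlt : t < x k := by rw [ht]; linarith
      have htge : -A-1 ≤ t := by
        have := min_le_right (η/2) ((x k - (-A-1))/2)
        rw [ht]; linarith
      have htdist : dist t (x k) < η := by
        rw [Real.dist_eq, abs_of_nonpos (by rw [ht]; linarith)]
        have := min_le_left (η/2) ((x k - (-A-1))/2)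
        rw [ht]; linarith
      have hFt := hball t htdist
      rw [Real.dist_eq] at hFt
      have hFt' : (k:ℝ) * δ ≤ F t := by
        rcases abs_lt.mp hFt with ⟨h1, h2⟩
        linarith
      have htT : t ∈ T k := ⟨⟨htge, le_trans htlt.le hmem.1.2⟩, hFt'⟩
      have : x k ≤ t := by
        have hsinf : sInf (T k) ≤ t := csInf_le (hTbdd k) htT
        rw [hx]; simp only [hk0, if_false]; exact hsinf
      linarith
    linarith
  have hxmono : ∀ j k : ℕ, j ≤ k → (k:ℝ) * δ ≤ m → x j ≤ x k := by
    intro j k hjk hkm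
    rcases Nat.eq_zero_or_pos j with h0 | hpos
    · subst h0
      rcases Nat.eq_zero_or_pos k with h0' | hpos'
      · subst h0'; exact le_refl _
      · exact (hxmem k (Nat.pos_iff_ne_zero.mp hpos') hkm).1.1
    · have hj0 : j ≠ 0 := Nat.pos_iff_ne_zero.mp hpos
      have hk0 : k ≠ 0 := by omega
      have hjm : (j:ℝ) * δ ≤ m := by
        have h' : (j:ℝ) ≤ (k:ℝ) := by exact_mod_cast hjk
        exact le_trans (mul_le_mul_of_nonneg_right h' hδpos.le) hkm
      rw [hx]; simp only [hj0, hk0, if_false]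
      exact csInf_le_csInf (hTbdd j) (hTne k hkm) (fun t ht => ⟨ht.1, le_trans
        (mul_le_mul_of_nonneg_right (show (j:ℝ) ≤ (k:ℝ) by exact_mod_cast hjk) hδpos.le) ht.2⟩)
  have hgap : ∀ j k : ℕ, j ≤ k → (k:ℝ) * δ ≤ m → ((k:ℝ) - j) * δ ≤ x k - x j := by
    intro j k hjk hkm
    have h1 := hxF j (by
      have : (j:ℝ) ≤ (k:ℝ) := by exact_mod_cast hjk
      nlinarith [hδpos.le])
    have h2 := hxF k hkm
    have h3 := hlip (x j) (x k) (hxmono j k hjk hkm)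
    rw [h1, h2] at h3
    nlinarith
  have hscale : (2*(n:ℝ)+2) * δ = m := by
    rw [hδdef]; field_simp
  have hlev : ∀ k : ℕ, (k:ℝ) ≤ 2*n+2 → (k:ℝ) * δ ≤ m := by
    intro k hk
    calc (k:ℝ) * δ ≤ (2*(n:ℝ)+2) * δ := by nlinarith [hδpos.le]
      _ = m := hscale
  have hpick : ∀ j : Fin (n+1), (S ∩ Set.Ioc (x (2*(j:ℕ))) (x (2*(j:ℕ)+1))).Nonempty := by
    intro j
    have hj : ((j:ℕ):ℝ) ≤ n := by exact_mod_cast Nat.lt_succ_iff.mp j.2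
    have hk1 : ((2*(j:ℕ)+1 : ℕ):ℝ) * δ ≤ m := by
      apply hlev; push_cast; linarith
    have hk0 : ((2*(j:ℕ) : ℕ):ℝ) * δ ≤ m := by
      apply hlev; push_cast; linarith
    have hord : x (2*(j:ℕ)) ≤ x (2*(j:ℕ)+1) := hxmono _ _ (by omega) hk1
    have hvol : (volume (S ∩ Set.Ioc (x (2*(j:ℕ))) (x (2*(j:ℕ)+1)))).toReal = δ := by
      have hs := hsplit _ _ hord
      rw [hxF _ hk0, hxF _ hk1] at hs
      push_cast at hs ⊢
      linarith
    rw [Set.nonempty_iff_ne_empty]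
    intro hemp
    rw [hemp] at hvol
    simp at hvol
    linarith
  refine ⟨fun j => (hpick j).choose, fun j => (hpick j).choose_spec.1, ?_⟩
  intro j k hjk
  have hj : ((j:ℕ):ℝ) ≤ n := by exact_mod_cast Nat.lt_succ_iff.mp j.2
  have hk : ((k:ℕ):ℝ) ≤ n := by exact_mod_cast Nat.lt_succ_iff.mp k.2
  have hjk' : (j:ℕ) + 1 ≤ (k:ℕ) := hjk
  have hle1 : (hpick j).choose ≤ x (2*(j:ℕ)+1) := (hpick j).choose_spec.2.2
  have hgt2 : x (2*(k:ℕ)) < (hpick k).choose := (hpick k).choose_spec.2.1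
  have hgap' : (((2*(k:ℕ) : ℕ):ℝ) - ((2*(j:ℕ)+1 : ℕ):ℝ)) * δ ≤ x (2*(k:ℕ)) - x (2*(j:ℕ)+1) := by
    apply hgap
    · omega
    · apply hlev; push_cast; linarith
  have hcast : ((2*(k:ℕ) : ℕ):ℝ) - ((2*(j:ℕ)+1 : ℕ):ℝ) ≥ 1 := by
    push_cast
    have : ((j:ℕ):ℝ) + 1 ≤ (k:ℕ) := by exact_mod_cast hjk'
    linarith
  have : δ ≤ x (2*(k:ℕ)) - x (2*(j:ℕ)+1) := le_trans (by nlinarith [hδpos.le]) hgap'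
  rw [hδdef] at *
  linarith

noncomputable def myPoly (N : ℕ) (u : ℝ) (σ : Fin N → ℝ) : Polynomial ℝ :=
  (∑ i : Fin N, C (σ i) * X ^ ((i : ℕ) + 1)) - C u

lemma eval_myPoly (N : ℕ) (u : ℝ) (σ : Fin N → ℝ) (v : ℝ) :
    (myPoly N u σ).eval v = (∑ i, σ i * v ^ ((i : ℕ) + 1)) - u := by
  simp [myPoly, eval_finset_sum]

lemma degree_myPoly (N : ℕ) (u : ℝ) (σ : Fin N → ℝ) :
    (myPoly N u σ).degree < (N + 1 : ℕ) := by
  apply lt_of_le_of_lt (Polynomial.degree_sub_le _ _)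
  rw [max_lt_iff]
  constructor
  · apply lt_of_le_of_lt (Polynomial.degree_sum_le _ _)
    rw [Finset.sup_lt_iff (by exact_mod_cast WithBot.bot_lt_coe (N+1))]
    intro i _
    apply lt_of_le_of_lt (Polynomial.degree_C_mul_X_pow_le _ _)
    exact_mod_cast Nat.succ_lt_succ i.2
  · exact lt_of_le_of_lt Polynomial.degree_C_le (by exact_mod_cast Nat.succ_pos N)

lemma coeff_myPoly_zero (N : ℕ) (u : ℝ) (σ : Fin N → ℝ) :
    (myPoly N u σ).coeff 0 = -u := by
  simp [myPoly, Polynomial.finset_sum_coeff, Polynomial.coeff_X_pow]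

lemma coeff_myPoly_succ (N : ℕ) (u : ℝ) (σ : Fin N → ℝ) (i : Fin N) :
    (myPoly N u σ).coeff ((i : ℕ) + 1) = σ i := by
  simp only [myPoly, Polynomial.coeff_sub, Polynomial.finset_sum_coeff,
    Polynomial.coeff_C_mul, Polynomial.coeff_X_pow, Polynomial.coeff_C]
  rw [Finset.sum_eq_single i]
  · simp
  · intro b _ hb
    have : ¬ ((i : ℕ) + 1 = (b : ℕ) + 1) := by
      simp only [add_left_inj]
      exact fun h => hb (Fin.ext h).symm
    simp [this]
    intro h; exact absurd (Fin.ext h) hb.symm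
  · simp

lemma exists_large (N : ℕ) (hN : 1 ≤ N) (A : ℝ) (hA : 0 < A) :
    ∃ c : ℝ, 0 < c ∧ ∀ (u : ℝ) (σ : Fin N → ℝ), u ^ 2 + ∑ i, σ i ^ 2 = 1 →
      ∃ v ∈ Set.Icc (-A) A, c ≤ |(∑ i, σ i * v ^ ((i : ℕ) + 1)) - u| := by
  have hN0 : (0:ℝ) < N := by exact_mod_cast hN
  -- nodes
  set z : Fin (N+1) → ℝ := fun j => -A + 2 * A * (j : ℕ) / N with hz
  have hzmem : ∀ j, z j ∈ Set.Icc (-A) A := by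
    intro j
    have hj0 : (0:ℝ) ≤ (j : ℕ) := by positivity
    have hjN : ((j : ℕ) : ℝ) ≤ N := by exact_mod_cast Nat.lt_succ_iff.mp j.2
    constructor
    · have : 0 ≤ 2 * A * (j:ℕ) / N := by positivity
      simp [hz]; linarith
    · simp only [hz]
      have h2 : 2 * A * ((j:ℕ):ℝ) / N ≤ 2 * A := by
        rw [div_le_iff₀ hN0]; nlinarith
      linarith
  have hzinj : Function.Injective z := by
    intro a b hab
    simp only [hz] at hab
    have h1 : 2 * A * ((a:ℕ):ℝ) / N = 2 * A * ((b:ℕ):ℝ) / N := by linarith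
    have h2 : ((a:ℕ):ℝ) = ((b:ℕ):ℝ) := by
      field_simp at h1
      exact_mod_cast h1
    exact Fin.ext (by exact_mod_cast h2)
  -- the function g
  set g : ℝ × (Fin N → ℝ) → ℝ :=
    fun x => ∑ j : Fin (N+1), |(∑ i, x.2 i * (z j) ^ ((i : ℕ) + 1)) - x.1| with hg
  have hgcont : Continuous g := by
    apply continuous_finset_sum
    intro j _
    apply Continuous.abs
    apply Continuous.sub
    · apply continuous_finset_sum
      intro i _
      exact ((continuous_apply i).comp continuous_snd).mul continuous_const
    · exact continuous_fst
  -- the sphere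
  set K : Set (ℝ × (Fin N → ℝ)) := {x | x.1 ^ 2 + ∑ i, x.2 i ^ 2 = 1} with hK
  have hKclosed : IsClosed K := by
    apply isClosed_eq _ continuous_const
    apply Continuous.add
    · exact (continuous_fst).pow 2
    · exact continuous_finset_sum _ fun i _ => ((continuous_apply i).comp continuous_snd).pow 2
  have hKbdd : Bornology.IsBounded K := by
    apply Bornology.IsBounded.subset (Metric.isBounded_closedBall (x := (0 : ℝ × (Fin N → ℝ))) (r := 1))
    intro x hx
    have hterm : ∀ i, (x.2 i) ^ 2 ≤ 1 := by
      intro i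
      have h1 : (0:ℝ) ≤ x.1 ^ 2 := sq_nonneg _
      have h2 : ∑ i, x.2 i ^ 2 ≤ 1 := by rw [Set.mem_setOf_eq] at hx; nlinarith
      have h3 : x.2 i ^ 2 ≤ ∑ k, x.2 k ^ 2 := by
        simpa using Finset.single_le_sum (f := fun k => x.2 k ^ 2) (fun k _ => sq_nonneg _)
          (Finset.mem_univ i)
      linarith
    have hu : x.1 ^ 2 ≤ 1 := by
      rw [Set.mem_setOf_eq] at hx
      have : (0:ℝ) ≤ ∑ i, x.2 i ^ 2 := Finset.sum_nonneg fun i _ => sq_nonneg _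
      linarith
    rw [Metric.mem_closedBall, dist_zero_right, Prod.norm_def]
    apply max_le
    · rw [Real.norm_eq_abs]
      exact (sq_le_one_iff_abs_le_one _).mp hu
    · apply pi_norm_le_iff_of_nonneg (by norm_num) |>.mpr
      intro i
      rw [Real.norm_eq_abs]
      exact (sq_le_one_iff_abs_le_one _).mp (hterm i)
  have hKcompact : IsCompact K := Metric.isCompact_of_isClosed_isBounded hKclosed hKbdd
  have hKne : K.Nonempty :=
    ⟨(1, 0), show (1:ℝ) ^ 2 + ∑ _i : Fin N, (0:ℝ) ^ 2 = 1 by simp⟩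
  obtain ⟨x₀, hx₀K, hx₀min⟩ := hKcompact.exists_isMinOn hKne hgcont.continuousOn
  have hgpos : 0 < g x₀ := by
    rcases (Finset.sum_nonneg fun j _ => abs_nonneg _ : (0:ℝ) ≤ g x₀).lt_or_eq with h | h
    · exact h
    have hall : ∀ j : Fin (N+1), (myPoly N x₀.1 x₀.2).eval (z j) = 0 := by
      intro j
      have : |(∑ i, x₀.2 i * (z j) ^ ((i : ℕ) + 1)) - x₀.1| = 0 := by
        have := Finset.sum_eq_zero_iff_of_nonneg (fun j _ => abs_nonneg _) |>.mp h.symm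
        exact this j (Finset.mem_univ j)
      rw [eval_myPoly]
      exact abs_eq_zero.mp this
    have hpz : myPoly N x₀.1 x₀.2 = 0 := by
      refine Polynomial.eq_zero_of_degree_lt_of_eval_index_eq_zero (v := z)
        Finset.univ hzinj.injOn ?_ (fun j _ => hall j)
      rw [Finset.card_univ, Fintype.card_fin]
      exact degree_myPoly N x₀.1 x₀.2
    have hu0 : x₀.1 = 0 := by
      have := coeff_myPoly_zero N x₀.1 x₀.2
      rw [hpz] at this; simpa using this.symm
    have hσ0 : ∀ i, x₀.2 i = 0 := by
      intro i
      have := coeff_myPoly_succ N x₀.1 x₀.2 i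
      rw [hpz] at this; simpa using this.symm
    have : x₀.1 ^ 2 + ∑ i, x₀.2 i ^ 2 = 1 := hx₀K
    rw [hu0] at this
    simp [hσ0] at this
  refine ⟨g x₀ / (N + 1), by positivity, ?_⟩
  intro u σ huσ
  by_contra hcon
  push_neg at hcon
  have hlt : g (u, σ) < (N + 1) * (g x₀ / (N + 1)) := by
    rw [hg]
    calc ∑ j : Fin (N+1), |(∑ i, σ i * (z j) ^ ((i : ℕ) + 1)) - u|
        < ∑ j : Fin (N+1), (g x₀ / (N + 1)) := by
          apply Finset.sum_lt_sum_of_nonempty Finset.univ_nonempty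
          intro j _
          exact hcon (z j) (hzmem j)
      _ = (N + 1) * (g x₀ / (N + 1)) := by
          rw [Finset.sum_const, Finset.card_univ, Fintype.card_fin]
          push_cast; ring
  have : g x₀ ≤ g (u, σ) := hx₀min (show (u, σ) ∈ K from huσ)
  rw [mul_div_cancel₀] at hlt
  · linarith
  · positivity

lemma lagrange_bound (n : ℕ) (δ M ε : ℝ) (hδ : 0 < δ)
    (y : Fin (n+1) → ℝ) (hy : ∀ j k : Fin (n+1), j ≠ k → δ ≤ |y j - y k|)
    (p : Polynomial ℝ) (hp : p.degree < (n+1 : ℕ))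
    (hval : ∀ j, |p.eval (y j)| ≤ ε)
    (v : ℝ) (hv : ∀ j, |v - y j| ≤ M) :
    |p.eval v| ≤ (n+1) * ε * (M/δ)^n := by
  have hyinj : Set.InjOn y (Finset.univ : Finset (Fin (n+1))) := by
    intro a _ b _ hab
    by_contra h
    have := hy a b h
    rw [hab, sub_self, abs_zero] at this
    linarith
  have hcard : (Finset.univ : Finset (Fin (n+1))).card = n + 1 := by simp
  have hdeg : p.degree < (Finset.univ : Finset (Fin (n+1))).card := by
    rw [hcard]; exact_mod_cast hp
  have hrep := Lagrange.eq_interpolate hyinj hdeg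
  have heval : p.eval v = ∑ j : Fin (n+1), p.eval (y j) * (Lagrange.basis Finset.univ y j).eval v := by
    conv_lhs => rw [hrep]
    rw [Lagrange.interpolate_apply, eval_finset_sum]
    simp [eval_mul]
  rw [heval]
  have hbasis : ∀ j : Fin (n+1), |(Lagrange.basis Finset.univ y j).eval v| ≤ (M/δ)^n := by
    intro j
    have : (Lagrange.basis Finset.univ y j).eval v
        = ∏ k ∈ Finset.univ.erase j, (Lagrange.basisDivisor (y j) (y k)).eval v := by
      rw [Lagrange.basis, eval_prod]
    rw [this, abs_prod]
    have hcard' : (Finset.univ.erase j).card = n := by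
      simp
    calc ∏ k ∈ Finset.univ.erase j, |(Lagrange.basisDivisor (y j) (y k)).eval v|
        ≤ ∏ k ∈ Finset.univ.erase j, (M/δ) := by
          apply Finset.prod_le_prod
          · intro k _; positivity
          · intro k hk
            have hne : j ≠ k := (Finset.ne_of_mem_erase hk).symm
            have h1 := hy j k hne
            have h2 := hv k
            rw [Lagrange.basisDivisor]
            simp only [eval_mul, eval_C, eval_sub, eval_X, abs_mul, abs_inv]
            calc |y j - y k|⁻¹ * |v - y k| ≤ δ⁻¹ * M :=
                  mul_le_mul (inv_anti₀ hδ h1) h2 (abs_nonneg _) (by positivity)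
              _ = M / δ := by rw [div_eq_mul_inv]; ring
      _ = (M/δ)^n := by rw [Finset.prod_const, hcard']
  have hε : 0 ≤ ε := le_trans (abs_nonneg _) (hval 0)
  calc |∑ j : Fin (n+1), p.eval (y j) * (Lagrange.basis Finset.univ y j).eval v|
      ≤ ∑ j : Fin (n+1), |p.eval (y j) * (Lagrange.basis Finset.univ y j).eval v| :=
        Finset.abs_sum_le_sum_abs _ _
    _ ≤ ∑ j : Fin (n+1), ε * (M/δ)^n := by
        apply Finset.sum_le_sum
        intro j _
        rw [abs_mul]
        exact mul_le_mul (hval j) (hbasis j) (abs_nonneg _) hε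
    _ = (n+1) * ε * (M/δ)^n := by
        rw [Finset.sum_const, Finset.card_univ, Fintype.card_fin]
        push_cast; ring

theorem stmt_14 (N : ℕ) (hN : 1 ≤ N) (A : ℝ) (hA : 0 < A) :
    ∃ C : ℝ, 0 < C ∧ ∀ (u : ℝ) (σ : Fin N → ℝ), u ^ 2 + ∑ i, σ i ^ 2 = 1 →
      ∀ ε : ℝ, 0 < ε →
      volume {v : ℝ | v ∈ Set.Icc (-A) A ∧ |(∑ i, σ i * v ^ ((i : ℕ) + 1)) - u| ≤ ε} ≤
        ENNReal.ofReal (C * ε ^ ((1 : ℝ) / N)) := by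
  obtain ⟨c, hc, hlarge⟩ := exists_large N hN A hA
  have hNR : (0:ℝ) < N := by exact_mod_cast hN
  set K : ℝ := (2*(N:ℝ)+2)^N * ((N:ℝ)+1) * (2*A)^N / c with hKdef
  have hK : 0 < K := by positivity
  refine ⟨K ^ ((1:ℝ)/N), Real.rpow_pos_of_pos hK _, ?_⟩
  intro u σ huσ ε hε
  set S : Set ℝ := {v : ℝ | v ∈ Set.Icc (-A) A ∧ |(∑ i, σ i * v ^ ((i : ℕ) + 1)) - u| ≤ ε}
    with hSdef
  have hScont : Continuous fun v : ℝ => |(∑ i, σ i * v ^ ((i : ℕ) + 1)) - u| := by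
    apply Continuous.abs
    apply Continuous.sub _ continuous_const
    exact continuous_finset_sum _ fun i _ => (continuous_const.mul (continuous_pow _))
  have hSclosed : IsClosed S := by
    have : S = Set.Icc (-A) A ∩
        (fun v : ℝ => |(∑ i, σ i * v ^ ((i : ℕ) + 1)) - u|) ⁻¹' Set.Iic ε := by
      ext v; simp [hSdef, Set.mem_setOf_eq]
    rw [this]
    exact isClosed_Icc.inter (isClosed_Iic.preimage hScont)
  have hSsub : S ⊆ Set.Icc (-A) A := fun v hv => hv.1
  have hSfin : volume S ≠ ⊤ := by
    refine ne_top_of_le_ne_top ?_ (measure_mono hSsub)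
    simp [Real.volume_Icc]
  set m : ℝ := (volume S).toReal with hm
  have hm0 : 0 ≤ m := ENNReal.toReal_nonneg
  have hRHS : 0 < K ^ ((1:ℝ)/N) * ε ^ ((1:ℝ)/N) := by
    have := Real.rpow_pos_of_pos hε ((1:ℝ)/N)
    have := Real.rpow_pos_of_pos hK ((1:ℝ)/N)
    positivity
  suffices hms : m ≤ K ^ ((1:ℝ)/N) * ε ^ ((1:ℝ)/N) by
    calc volume S = ENNReal.ofReal m := (ENNReal.ofReal_toReal hSfin).symm
      _ ≤ ENNReal.ofReal (K ^ ((1:ℝ)/N) * ε ^ ((1:ℝ)/N)) := ENNReal.ofReal_le_ofReal hms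
  rcases eq_or_lt_of_le hm0 with hm00 | hmpos
  · rw [← hm00]; exact hRHS.le
  -- the separated points
  obtain ⟨y, hyS, hygap⟩ := exists_separated N A hA S hSclosed.measurableSet hSsub hmpos
  set δ : ℝ := m / (2*(N:ℝ)+2) with hδdef
  have hδpos : 0 < δ := by positivity
  have hpair : ∀ j k : Fin (N+1), j ≠ k → δ ≤ |y j - y k| := by
    intro j k hjk
    rcases hjk.lt_or_gt with h | h
    · rw [abs_sub_comm, abs_of_nonneg (by linarith [hygap j k h])]
      exact hygap j k h
    · rw [abs_of_nonneg (by linarith [hygap k j h])]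
      exact hygap k j h
  obtain ⟨v, hvmem, hvlarge⟩ := hlarge u σ huσ
  have hval : ∀ j, |(myPoly N u σ).eval (y j)| ≤ ε := by
    intro j
    rw [eval_myPoly]
    exact (hyS j).2
  have hv2A : ∀ j, |v - y j| ≤ 2*A := by
    intro j
    have h1 := hvmem.1; have h2 := hvmem.2
    have h3 := (hSsub (hyS j)).1; have h4 := (hSsub (hyS j)).2
    rw [abs_le]; constructor <;> linarith
  have hlag := lagrange_bound N δ (2*A) ε hδpos y hpair (myPoly N u σ)
    (degree_myPoly N u σ) hval v hv2A
  rw [eval_myPoly] at hlag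
  have hclag : c ≤ ((N:ℝ)+1) * ε * (2*A/δ)^N := le_trans hvlarge hlag
  have hδN : (0:ℝ) < δ^N := pow_pos hδpos N
  have h2 : c * δ^N ≤ ((N:ℝ)+1) * ε * (2*A)^N := by
    rw [div_pow] at hclag
    have : ((N:ℝ)+1) * ε * ((2*A)^N / δ^N) = (((N:ℝ)+1) * ε * (2*A)^N) / δ^N := by ring
    rw [this] at hclag
    exact (le_div_iff₀ hδN).mp hclag
  have h3 : c * m^N ≤ (2*(N:ℝ)+2)^N * (((N:ℝ)+1) * ε * (2*A)^N) := by
    have e : δ^N = m^N / (2*(N:ℝ)+2)^N := by rw [hδdef, div_pow]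
    have hQ : (0:ℝ) < (2*(N:ℝ)+2)^N := by positivity
    have e2 : c * (m^N / (2*(N:ℝ)+2)^N) = (c * m^N) / (2*(N:ℝ)+2)^N := by ring
    rw [e, e2] at h2
    have h3' := (div_le_iff₀ hQ).mp h2
    linarith [h3']
  have hmK : m^N ≤ K * ε := by
    rw [hKdef, div_mul_eq_mul_div, le_div_iff₀ hc]
    nlinarith [h3]
  calc m = (m^N) ^ ((1:ℝ)/N) := by
        rw [← Real.rpow_natCast m N, ← Real.rpow_mul hm0, mul_one_div,
          div_self (ne_of_gt hNR), Real.rpow_one]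
    _ ≤ (K * ε) ^ ((1:ℝ)/N) := Real.rpow_le_rpow (pow_nonneg hm0 N) hmK (by positivity)
    _ = K ^ ((1:ℝ)/N) * ε ^ ((1:ℝ)/N) := Real.mul_rpow hK.le hε.le
end
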